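/- arXiv:2105.00383 — 8 statements merged into one kernel-verified Lean document; each statement's English description precedes it below -/
import Mathlib

section
/- Let H = ⟨m_0,…,m_p,n⟩ with m_i = m_0 + i·d, H' = Σ ℕ m_i, u = min{t ∈ ℕ : g_t ∉ Ap(H, m_0)} and v = min{b ≥ 1 : b·n ∈ H'}. Then there exist unique integers z ∈ [0, u−1], w ∈ [0, v−1], λ ≥ 1, μ ≥ 0 such that g_u = λ m_0 + w·n and v·n = μ m_0 + g_z. -/
/-- Membership in the numerical semigroup `H' = ⟨m_0, …, m_p⟩`,
where `m_i = m0 + i·d`. -/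
def inSpan (p : ℕ) (m0 d x : ℤ) : Prop :=
  ∃ a : Fin (p+1) → ℕ, x = ∑ i : Fin (p+1), (a i : ℤ) * (m0 + ((i : ℕ) : ℤ) * d)

/-- Membership in `H = H' + ℕ·n = ⟨m_0, …, m_p, n⟩`. -/
def inH (p : ℕ) (m0 d n x : ℤ) : Prop :=
  ∃ (a : Fin (p+1) → ℕ) (c : ℕ),
    x = (∑ i : Fin (p+1), (a i : ℤ) * (m0 + ((i : ℕ) : ℤ) * d)) + (c : ℤ) * n

/-- Membership in the Apéry set `Ap(H, m0)`. -/
def inAp (p : ℕ) (m0 d n x : ℤ) : Prop :=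
  inH p m0 d n x ∧ ¬ inH p m0 d n (x - m0)

/-- `g` is the function `t ↦ g_t = q_t m_p + m_{r_t}`, where `t = q_t p + r_t`
with `r_t ∈ [1,p]`. -/
def gChar (p : ℕ) (m0 d : ℤ) (g : ℕ → ℤ) : Prop :=
  ∀ t : ℕ, ∃ q r : ℤ, 1 ≤ r ∧ r ≤ (p : ℤ) ∧ (t : ℤ) = q * (p : ℤ) + r ∧
    g t = q * (m0 + (p : ℤ) * d) + (m0 + r * d)

/-- `{m_0, …, m_p, n}` is a minimal generating set of `H`. -/
def MinGen (p : ℕ) (m0 d n : ℤ) : Prop :=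
  (∀ i : Fin (p+1), ¬ ∃ (a : Fin (p+1) → ℕ) (c : ℕ), a i = 0 ∧
      m0 + ((i : ℕ) : ℤ) * d =
        (∑ j : Fin (p+1), (a j : ℤ) * (m0 + ((j : ℕ) : ℤ) * d)) + (c : ℤ) * n) ∧
  ¬ inSpan p m0 d n

/-- `f` is a pseudo-Frobenius number of `H`. -/
def isPF (p : ℕ) (m0 d n f : ℤ) : Prop :=
  ¬ inH p m0 d n f ∧ ∀ h : ℤ, inH p m0 d n h → h ≠ 0 → inH p m0 d n (f + h)

lemma span_add (p : ℕ) (m0 d x y : ℤ) (hx : inSpan p m0 d x) (hy : inSpan p m0 d y) :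
    inSpan p m0 d (x + y) := by
  obtain ⟨a, ha⟩ := hx; obtain ⟨b, hb⟩ := hy
  refine ⟨fun i => a i + b i, ?_⟩
  rw [ha, hb, ← Finset.sum_add_distrib]
  apply Finset.sum_congr rfl
  intro i _; push_cast; ring

lemma span_single (p : ℕ) (m0 d : ℤ) (k i : ℕ) (hi : i ≤ p) :
    inSpan p m0 d ((k : ℤ) * (m0 + (i : ℤ) * d)) := by
  refine ⟨fun j => if j = (⟨i, by omega⟩ : Fin (p+1)) then k else 0, ?_⟩
  rw [Finset.sum_eq_single (⟨i, by omega⟩ : Fin (p+1))]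
  · simp
  · intro b _ hb; simp [hb]
  · simp

lemma span_of (p : ℕ) (hp : 0 < p) (m0 d : ℤ) (A T : ℕ) (h : T ≤ p * A) :
    inSpan p m0 d ((A : ℤ) * m0 + (T : ℤ) * d) := by
  set b := T / p with hbdef
  set c := T % p with hcdef
  have hbc : p * b + c = T := Nat.div_add_mod T p
  have hc : c < p := Nat.mod_lt _ hp
  by_cases hc0 : c = 0
  · have hb : b ≤ A := by nlinarith
    have h1 := span_single p m0 d (A - b) 0 (Nat.zero_le p)
    have h2 := span_single p m0 d b p le_rfl
    have h3 := span_add p m0 d _ _ h1 h2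
    have heq : (A : ℤ) * m0 + (T : ℤ) * d =
        ((A - b : ℕ) : ℤ) * (m0 + ((0:ℕ) : ℤ) * d) + (b : ℤ) * (m0 + (p : ℤ) * d) := by
      have hT : (T : ℤ) = (p : ℤ) * b := by omega
      rw [Nat.cast_sub hb]; push_cast; linear_combination d * hT
    rw [heq]; exact h3
  · have hb : b + 1 ≤ A := by nlinarith [Nat.one_le_iff_ne_zero.mpr hc0]
    have h1 := span_single p m0 d (A - b - 1) 0 (Nat.zero_le p)
    have h2 := span_single p m0 d b p le_rfl
    have h3 := span_single p m0 d 1 c hc.le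
    have h4 := span_add p m0 d _ _ (span_add p m0 d _ _ h1 h2) h3
    have heq : (A : ℤ) * m0 + (T : ℤ) * d =
        ((A - b - 1 : ℕ) : ℤ) * (m0 + ((0:ℕ) : ℤ) * d) + (b : ℤ) * (m0 + (p : ℤ) * d)
          + (1 : ℕ) * (m0 + (c : ℤ) * d) := by
      have hT : (T : ℤ) = (p : ℤ) * b + c := by omega
      have : ((A - b - 1 : ℕ) : ℤ) = (A : ℤ) - b - 1 := by omega
      rw [this]; push_cast; linear_combination d * hT
    rw [heq]; exact h4

lemma span_dest (p : ℕ) (m0 d x : ℤ) (h : inSpan p m0 d x) :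
    ∃ A T : ℕ, T ≤ p * A ∧ x = (A : ℤ) * m0 + (T : ℤ) * d := by
  obtain ⟨a, ha⟩ := h
  refine ⟨∑ i, a i, ∑ i : Fin (p+1), (i : ℕ) * a i, ?_, ?_⟩
  · calc ∑ i : Fin (p+1), (i : ℕ) * a i ≤ ∑ i : Fin (p+1), p * a i :=
        Finset.sum_le_sum (fun i _ => Nat.mul_le_mul_right _ (Nat.le_of_lt_succ i.isLt))
      _ = p * ∑ i, a i := (Finset.mul_sum _ _ _).symm
  · rw [ha]; push_cast
    rw [Finset.sum_mul, Finset.sum_mul, ← Finset.sum_add_distrib]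
    apply Finset.sum_congr rfl
    intro i _; ring

lemma inH_of (p : ℕ) (m0 d n y : ℤ) (c : ℕ) (h : inSpan p m0 d y) :
    inH p m0 d n (y + (c : ℤ) * n) := by
  obtain ⟨a, ha⟩ := h; exact ⟨a, c, by rw [ha]⟩

lemma inH_of' (p : ℕ) (m0 d n y : ℤ) (h : inSpan p m0 d y) : inH p m0 d n y := by
  have := inH_of p m0 d n y 0 h; simpa using this

lemma inH_dest (p : ℕ) (m0 d n x : ℤ) (h : inH p m0 d n x) :
    ∃ y : ℤ, ∃ c : ℕ, inSpan p m0 d y ∧ x = y + (c : ℤ) * n := by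
  obtain ⟨a, c, ha⟩ := h; exact ⟨_, c, ⟨a, rfl⟩, ha⟩

lemma inH_zero (p : ℕ) (m0 d n : ℤ) : inH p m0 d n 0 :=
  ⟨fun _ => 0, 0, by simp⟩

lemma inH_nonneg (p : ℕ) (m0 d n x : ℤ) (hm0 : 0 < m0) (hd : 0 < d) (hn : 0 < n)
    (h : inH p m0 d n x) : 0 ≤ x := by
  obtain ⟨a, c, ha⟩ := h
  rw [ha]
  have h1 : (0:ℤ) ≤ ∑ i : Fin (p+1), (a i : ℤ) * (m0 + ((i : ℕ) : ℤ) * d) := by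
    apply Finset.sum_nonneg
    intro i _
    have : (0:ℤ) ≤ ((i:ℕ):ℤ) * d := mul_nonneg (Int.natCast_nonneg _) hd.le
    have := Int.natCast_nonneg (a i)
    nlinarith
  have h2 : (0:ℤ) ≤ (c : ℤ) * n := mul_nonneg (Int.natCast_nonneg _) hn.le
  linarith


set_option maxHeartbeats 1600000

/-- with `u = min{t : g_t ∉ Ap(H,m_0)}` and
`v = min{b ≥ 1 : b·n ∈ H'}`, there exist unique `z ∈ [0,u−1]`, `w ∈ [0,v−1]`,
`λ ≥ 1`, `μ ≥ 0` with `g_u = λ m_0 + w n` and `v n = μ m_0 + g_z`. -/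
theorem stmt_4 (p : ℕ) (hp : 0 < p) (m0 d n : ℤ)
    (hm0 : 0 < m0) (hd : 0 < d) (hn : 0 < n)
    (hgcd : ∃ x y z : ℤ, x * m0 + y * d + z * n = 1)
    (g : ℕ → ℤ) (hg : gChar p m0 d g)
    (u v : ℕ)
    (hu : IsLeast {t : ℕ | ¬ inAp p m0 d n (g t)} u)
    (hv : IsLeast {b : ℕ | 1 ≤ b ∧ inSpan p m0 d ((b : ℤ) * n)} v) :
    ∃! zwlm : ℕ × ℕ × ℕ × ℕ,
      zwlm.1 < u ∧ zwlm.2.1 < v ∧ 1 ≤ zwlm.2.2.1 ∧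
      g u = (zwlm.2.2.1 : ℤ) * m0 + (zwlm.2.1 : ℤ) * n ∧
      (v : ℤ) * n = (zwlm.2.2.2 : ℤ) * m0 + g zwlm.1 := by
  classical
  have hp' : (0:ℤ) < (p:ℤ) := by exact_mod_cast hp
  -- the Q function : g t = Q t * m0 + t * d with p*(Q t - 1) < t ≤ p * Q t
  have hQex : ∀ t : ℕ, ∃ Q : ℕ, g t = (Q:ℤ) * m0 + (t:ℤ) * d ∧
      (p:ℤ) * ((Q:ℤ) - 1) < (t:ℤ) ∧ (t:ℤ) ≤ (p:ℤ) * (Q:ℤ) := by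
    intro t
    obtain ⟨q, r, hr1, hrp, ht, hgt⟩ := hg t
    have htnn : (0:ℤ) ≤ (t:ℤ) := Int.natCast_nonneg t
    have hq : -1 ≤ q := by nlinarith
    refine ⟨(q+1).toNat, ?_, ?_, ?_⟩ <;>
      rw [Int.toNat_of_nonneg (by omega : (0:ℤ) ≤ q + 1)]
    · linear_combination hgt - d * ht
    · linarith [ht, hr1]
    · linarith [ht, hrp]
  choose Q hQ using hQex
  have hQ1 : ∀ t, g t = (Q t : ℤ) * m0 + (t:ℤ) * d := fun t => (hQ t).1
  have hQlo : ∀ t, (p:ℤ) * ((Q t : ℤ) - 1) < (t:ℤ) := fun t => (hQ t).2.1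
  have hQhi : ∀ t : ℕ, (t:ℤ) ≤ (p:ℤ) * (Q t : ℤ) := fun t => (hQ t).2.2
  have hdiv : ∀ a b : ℕ, (p:ℤ) * ((a:ℤ) - 1) < (p:ℤ) * (b:ℤ) → a ≤ b := by
    intro a b h
    have h2 : (a:ℤ) - 1 < (b:ℤ) := lt_of_mul_lt_mul_left h hp'.le
    omega
  have hQmono : ∀ s t, s ≤ t → Q s ≤ Q t := by
    intro s t hst
    apply hdiv
    calc (p:ℤ) * ((Q s : ℤ) - 1) < (s:ℤ) := hQlo s
      _ ≤ (t:ℤ) := by exact_mod_cast hst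
      _ ≤ (p:ℤ) * (Q t : ℤ) := hQhi t
  have hQsub : ∀ s t, Q (s+t) ≤ Q s + Q t := by
    intro s t
    apply hdiv
    have h1 := hQhi s; have h2 := hQhi t; have h3 := hQlo (s+t)
    push_cast at h3 ⊢
    nlinarith
  have hQsup : ∀ s t, Q s + Q t ≤ Q (s+t) + 1 := by
    intro s t
    apply hdiv
    have h1 := hQlo s; have h2 := hQlo t; have h3 := hQhi (s+t)
    push_cast at h3 ⊢
    nlinarith
  have hQ0 : Q 0 = 0 := by
    rcases Nat.eq_zero_or_pos (Q 0) with h | h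
    · exact h
    · exfalso
      have h1 : (1:ℤ) ≤ (Q 0 : ℤ) := by exact_mod_cast h
      have := hQlo 0
      push_cast at this
      nlinarith
  have hg0 : g 0 = 0 := by rw [hQ1 0, hQ0]; simp
  have hgmono : ∀ s t : ℕ, s < t → g s < g t := by
    intro s t h
    rw [hQ1 s, hQ1 t]
    have h1 : (Q s : ℤ) ≤ (Q t : ℤ) := by exact_mod_cast hQmono s t h.le
    have h2 : (s:ℤ) + 1 ≤ (t:ℤ) := by exact_mod_cast h
    nlinarith
  have hgnn : ∀ t, 0 ≤ g t := by
    intro t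
    rw [hQ1 t]
    have h1 : (0:ℤ) ≤ (Q t : ℤ) * m0 := mul_nonneg (Int.natCast_nonneg _) hm0.le
    have h2 : (0:ℤ) ≤ (t : ℤ) * d := mul_nonneg (Int.natCast_nonneg _) hd.le
    linarith
  have hgpos : ∀ t : ℕ, 1 ≤ t → 0 < g t := by
    intro t ht
    have := hgmono 0 t ht
    rwa [hg0] at this
  -- span in terms of g
  have spanG : ∀ s k : ℕ, inSpan p m0 d (g s + (k:ℤ) * m0) := by
    intro s k
    have hsp : s ≤ p * Q s := by exact_mod_cast hQhi s
    have heq : g s + (k:ℤ) * m0 = ((Q s + k : ℕ) : ℤ) * m0 + (s:ℤ) * d := by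
      rw [hQ1 s]; push_cast; ring
    rw [heq]
    exact span_of p hp m0 d (Q s + k) s (le_trans hsp (Nat.mul_le_mul_left p (Nat.le_add_right _ k)))
  have spang : ∀ s : ℕ, inSpan p m0 d (g s) := by
    intro s; have := spanG s 0; simpa using this
  have spanD : ∀ x : ℤ, inSpan p m0 d x → ∃ s k : ℕ, x = g s + (k:ℤ) * m0 := by
    intro x hx
    obtain ⟨A, T, hTA, hxeq⟩ := span_dest p m0 d x hx
    have hQTA : Q T ≤ A := by
      apply hdiv
      calc (p:ℤ) * ((Q T : ℤ) - 1) < (T:ℤ) := hQlo T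
        _ ≤ (p:ℤ) * (A:ℤ) := by exact_mod_cast hTA
    refine ⟨T, A - Q T, ?_⟩
    rw [hxeq, hQ1 T, Nat.cast_sub hQTA]
    ring
  have hH_dest : ∀ x : ℤ, inH p m0 d n x → ∃ s k c : ℕ, x = g s + (k:ℤ) * m0 + (c:ℤ) * n := by
    intro x hx
    obtain ⟨y, c, hy, hxy⟩ := inH_dest p m0 d n x hx
    obtain ⟨s, k, hsk⟩ := spanD y hy
    exact ⟨s, k, c, by rw [hxy, hsk]⟩
  have hH_mk : ∀ s k c : ℕ, inH p m0 d n (g s + (k:ℤ) * m0 + (c:ℤ) * n) := by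
    intro s k c
    exact inH_of p m0 d n _ c (spanG s k)
  -- key lemma L1
  have L1 : ∀ (t K c : ℕ), 1 ≤ K → g u = g t + (K:ℤ) * m0 + (c:ℤ) * n → t = 0 := by
    intro t K c hK heq
    by_contra ht0
    have ht1 : 1 ≤ t := Nat.one_le_iff_ne_zero.mpr ht0
    have hlt : g t < g u := by
      rw [heq]
      have h1 : (0:ℤ) ≤ (c:ℤ) * n := mul_nonneg (Int.natCast_nonneg _) hn.le
      have h2 : (1:ℤ) ≤ (K:ℤ) := by exact_mod_cast hK
      nlinarith
    have htu : t < u := by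
      by_contra h
      push_neg at h
      rcases eq_or_lt_of_le h with h' | h'
      · rw [h'] at hlt; exact lt_irrefl _ hlt
      · exact absurd (hgmono u t h') (by linarith)
    set t' := u - t with ht'def
    have htt' : t + t' = u := by omega
    have hδ : Q u ≤ Q t + Q t' := by rw [← htt']; exact hQsub t t'
    have hucast : (u:ℤ) = (t:ℤ) + (t':ℤ) := by exact_mod_cast htt'.symm
    have key : g t' = ((K:ℤ) + (Q t : ℤ) + (Q t' : ℤ) - (Q u : ℤ)) * m0 + (c:ℤ) * n := by
      have e1 := hQ1 u; have e2 := hQ1 t; have e3 := hQ1 t'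
      linear_combination e3 + e2 - e1 + heq - d * hucast
    have hD : ((K + Q t + Q t' - Q u - 1 : ℕ) : ℤ) = (K:ℤ) + (Q t:ℤ) + (Q t':ℤ) - (Q u:ℤ) - 1 := by
      omega
    have hmem : inH p m0 d n (g t' - m0) := by
      have heq2 : g t' - m0 = g 0 + ((K + Q t + Q t' - Q u - 1 : ℕ):ℤ) * m0 + (c:ℤ) * n := by
        rw [hg0, hD]; linear_combination key
      rw [heq2]; exact hH_mk 0 _ c
    have hnAp : ¬ inAp p m0 d n (g t') := fun hAp => hAp.2 hmem
    have := hu.2 hnAp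
    omega
  -- u ≥ 1
  have hu1 : 1 ≤ u := by
    rcases Nat.eq_zero_or_pos u with h | h
    · exfalso
      apply hu.1
      rw [h, hg0]
      refine ⟨inH_zero p m0 d n, fun hc => ?_⟩
      have := inH_nonneg p m0 d n _ hm0 hd hn hc
      linarith
    · exact h
  -- g u = K m0 + c n
  have hguApnot : inH p m0 d n (g u - m0) := by
    by_contra h
    exact hu.1 ⟨inH_of' p m0 d n _ (spang u), h⟩
  obtain ⟨s1, k1, c1, hrep1⟩ := hH_dest _ hguApnot
  have hgu1 : g u = g s1 + ((k1 + 1 : ℕ):ℤ) * m0 + (c1:ℤ) * n := by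
    have hc : ((k1 + 1 : ℕ):ℤ) = (k1:ℤ) + 1 := by push_cast; ring
    rw [hc]
    linear_combination hrep1
  have hs10 : s1 = 0 := L1 s1 (k1+1) c1 (Nat.le_add_left 1 k1) hgu1
  have hguKc : g u = ((k1+1 : ℕ):ℤ) * m0 + (c1:ℤ) * n := by
    rw [hs10, hg0] at hgu1
    linarith
  -- v facts
  obtain ⟨hv1, hvspan⟩ := hv.1
  obtain ⟨s0, e0, hvrep⟩ := spanD _ hvspan
  -- get (lam, w)
  obtain ⟨lam, w, hwv, hlam1, hgu_lw⟩ :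
      ∃ lam w : ℕ, w < v ∧ 1 ≤ lam ∧ g u = (lam:ℤ) * m0 + (w:ℤ) * n := by
    by_cases hcv : c1 < v
    · exact ⟨k1+1, c1, hcv, Nat.le_add_left 1 k1, hguKc⟩
    · push_neg at hcv
      have hstep : g u = g s0 + ((e0 + (k1+1) : ℕ):ℤ) * m0 + ((c1 - v : ℕ):ℤ) * n := by
        have hc2 : ((k1 + 1 : ℕ):ℤ) = (k1:ℤ) + 1 := by push_cast; ring
        have hK := hguKc
        rw [hc2] at hK
        rw [Nat.cast_sub hcv]
        push_cast
        linear_combination hK + hvrep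
      have hs00 : s0 = 0 := L1 s0 (e0 + (k1+1)) (c1 - v) (by omega) hstep
      have hvn : (v:ℤ) * n = (e0:ℤ) * m0 := by
        rw [hs00, hg0] at hvrep
        linarith
      obtain ⟨q', r', hr', hc⟩ : ∃ q r : ℕ, r < v ∧ c1 = v * q + r :=
        ⟨c1 / v, c1 % v, Nat.mod_lt _ (by omega), (Nat.div_add_mod c1 v).symm⟩
      refine ⟨k1 + 1 + q' * e0, r', hr', by omega, ?_⟩
      have hcdm : (c1:ℤ) = (v:ℤ) * (q':ℤ) + (r':ℤ) := by exact_mod_cast hc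
      have hcast : ((k1 + 1 + q' * e0 : ℕ):ℤ) = (k1:ℤ) + 1 + (q':ℤ) * (e0:ℤ) := by
        push_cast; ring
      have hcast2 : ((k1 + 1 : ℕ):ℤ) = (k1:ℤ) + 1 := by push_cast; ring
      rw [hcast]
      rw [hcast2] at hguKc
      linear_combination hguKc + n * hcdm + (q':ℤ) * hvn
  -- get (z, μ)
  have hSne : ∃ s : ℕ, ∃ e : ℕ, (v:ℤ) * n = g s + (e:ℤ) * m0 := ⟨s0, e0, hvrep⟩
  set z := Nat.find hSne with hzdef
  obtain ⟨μ, hzrep⟩ := Nat.find_spec hSne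
  have hzu : z < u := by
    by_contra h
    push_neg at h
    set t' := z - u with ht'def
    have htt' : u + t' = z := by omega
    have hzcast : (z:ℤ) = (u:ℤ) + (t':ℤ) := by exact_mod_cast htt'.symm
    by_cases hw : w = 0
    · have hgu_l : g u = (lam:ℤ) * m0 := by rw [hw] at hgu_lw; simpa using hgu_lw
      have hQul : Q u ≤ lam := by
        by_contra hcon
        push_neg at hcon
        have h1 : (lam:ℤ) + 1 ≤ (Q u:ℤ) := by exact_mod_cast hcon
        have h2 := hQ1 u
        have h3 : (0:ℤ) ≤ (u:ℤ) * d := mul_nonneg (Int.natCast_nonneg _) hd.le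
        nlinarith
      have hδ : Q z ≤ Q u + Q t' := by rw [← htt']; exact hQsub u t'
      have hδ2 : Q t' ≤ Q z := hQmono t' z (by omega)
      have hM : ((μ + lam + Q z - Q u - Q t' : ℕ):ℤ)
          = (μ:ℤ) + (lam:ℤ) + (Q z:ℤ) - (Q u:ℤ) - (Q t':ℤ) := by omega
      have hmem : ∃ e : ℕ, (v:ℤ) * n = g t' + (e:ℤ) * m0 := by
        refine ⟨μ + lam + Q z - Q u - Q t', ?_⟩
        rw [hM, hQ1 t']
        have e1 := hQ1 z; have e2 := hQ1 u
        linear_combination hzrep + e1 - e2 + hgu_l + d * hzcast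
      have := Nat.find_min hSne (show t' < z by omega) hmem
      exact this
    · -- w ≥ 1
      have hsup : Q u + Q t' ≤ Q z + 1 := by rw [← htt']; exact hQsup u t'
      have hM : ((μ + lam + Q z - Q u - Q t' : ℕ):ℤ)
          = (μ:ℤ) + (lam:ℤ) + (Q z:ℤ) - (Q u:ℤ) - (Q t':ℤ) := by omega
      have hkey : ((v - w : ℕ):ℤ) * n = g t' + ((μ + lam + Q z - Q u - Q t' : ℕ):ℤ) * m0 := by
        rw [hM, hQ1 t', Nat.cast_sub hwv.le]
        have e1 := hQ1 z; have e2 := hQ1 u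
        linear_combination hzrep + e1 - e2 + hgu_lw + d * hzcast
      have hspan : inSpan p m0 d (((v - w : ℕ):ℤ) * n) := by
        rw [hkey]; exact spanG t' _
      have := hv.2 ⟨by omega, hspan⟩
      omega
  refine ⟨(z, w, lam, μ), ⟨hzu, hwv, hlam1, hgu_lw, by linarith [hzrep]⟩, ?_⟩
  -- uniqueness
  rintro ⟨z', w', lam', μ'⟩ ⟨hz'u, hw'v, hlam'1, hgu', hvn'⟩
  have claimW : ∀ w1 l1 w2 l2 : ℕ, w2 < v →
      (l1:ℤ) * m0 + (w1:ℤ) * n = (l2:ℤ) * m0 + (w2:ℤ) * n → w1 < w2 → False := by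
    intro w1 l1 w2 l2 hw2v heq hlt
    have h1 : ((l1:ℤ) - l2) * m0 = ((w2:ℤ) - w1) * n := by linear_combination heq
    have h2 : (1:ℤ) ≤ (w2:ℤ) - w1 := by
      have : (w1:ℤ) + 1 ≤ (w2:ℤ) := by exact_mod_cast hlt
      linarith
    have h3 : (0:ℤ) < ((w2:ℤ) - w1) * n := by nlinarith
    have h4 : (l2:ℤ) < l1 := by
      by_contra hcon
      push_neg at hcon
      have h6 : ((l1:ℤ) - l2) * m0 ≤ 0 :=
        mul_nonpos_iff.mpr (Or.inr ⟨by linarith, hm0.le⟩)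
      rw [h1] at h6
      linarith
    have h5 : l2 ≤ l1 := by exact_mod_cast h4.le
    have hspan : inSpan p m0 d (((w2 - w1 : ℕ):ℤ) * n) := by
      have heq2 : ((w2 - w1 : ℕ):ℤ) * n = ((l1 - l2 : ℕ):ℤ) * (m0 + ((0:ℕ):ℤ) * d) := by
        rw [Nat.cast_sub hlt.le, Nat.cast_sub h5]
        push_cast
        linear_combination -h1
      rw [heq2]
      exact span_single p m0 d (l1 - l2) 0 (Nat.zero_le p)
    have := hv.2 ⟨by omega, hspan⟩
    omega
  have hweq : w' = w := by
    have heqw : (lam':ℤ) * m0 + (w':ℤ) * n = (lam:ℤ) * m0 + (w:ℤ) * n := by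
      rw [← hgu_lw, ← hgu']
    rcases lt_trichotomy w' w with h | h | h
    · exact absurd (claimW w' lam' w lam hwv heqw h) (fun x => x)
    · exact h
    · exact absurd (claimW w lam w' lam' hw'v heqw.symm h) (fun x => x)
  have hlameq : lam' = lam := by
    have heqw : (lam':ℤ) * m0 + (w':ℤ) * n = (lam:ℤ) * m0 + (w:ℤ) * n := by
      rw [← hgu_lw, ← hgu']
    rw [hweq] at heqw
    have : (lam':ℤ) = (lam:ℤ) := by
      have := mul_right_cancel₀ (ne_of_gt hm0) (by linarith : (lam':ℤ) * m0 = (lam:ℤ) * m0)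
      exact this
    exact_mod_cast this
  have claimZ : ∀ z1 μ1 z2 μ2 : ℕ, z2 < u →
      (μ1:ℤ) * m0 + g z1 = (μ2:ℤ) * m0 + g z2 → z1 < z2 → False := by
    intro z1 μ1 z2 μ2 hz2u heq hlt
    set t0 := z2 - z1 with ht0def
    have htz : z1 + t0 = z2 := by omega
    have hzcast : (z2:ℤ) = (z1:ℤ) + (t0:ℤ) := by exact_mod_cast htz.symm
    have hsub : Q z2 ≤ Q z1 + Q t0 := by rw [← htz]; exact hQsub z1 t0
    have hc : g t0 = ((μ1:ℤ) - (μ2:ℤ) + (Q z1:ℤ) + (Q t0:ℤ) - (Q z2:ℤ)) * m0 := by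
      have e1 := hQ1 z1; have e2 := hQ1 z2; have e3 := hQ1 t0
      linear_combination e3 + e1 - e2 - heq - d * hzcast
    have ht01 : 1 ≤ t0 := by omega
    have hgt0 : 0 < g t0 := hgpos t0 ht01
    have hC1 : (1:ℤ) ≤ (μ1:ℤ) - (μ2:ℤ) + (Q z1:ℤ) + (Q t0:ℤ) - (Q z2:ℤ) := by
      by_contra hcon
      push_neg at hcon
      have hle : (μ1:ℤ) - (μ2:ℤ) + (Q z1:ℤ) + (Q t0:ℤ) - (Q z2:ℤ) ≤ 0 := by linarith
      have h6 : ((μ1:ℤ) - (μ2:ℤ) + (Q z1:ℤ) + (Q t0:ℤ) - (Q z2:ℤ)) * m0 ≤ 0 :=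
        mul_nonpos_iff.mpr (Or.inr ⟨hle, hm0.le⟩)
      rw [← hc] at h6
      linarith
    have hC2 : (0:ℤ) ≤ (μ1:ℤ) - (μ2:ℤ) + (Q z1:ℤ) + (Q t0:ℤ) - (Q z2:ℤ) - 1 := by linarith
    set N : ℕ := ((μ1:ℤ) - (μ2:ℤ) + (Q z1:ℤ) + (Q t0:ℤ) - (Q z2:ℤ) - 1).toNat with hNdef
    have hN : (N:ℤ) = (μ1:ℤ) - (μ2:ℤ) + (Q z1:ℤ) + (Q t0:ℤ) - (Q z2:ℤ) - 1 :=
      Int.toNat_of_nonneg hC2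
    have hmem : inH p m0 d n (g t0 - m0) := by
      have heq2 : g t0 - m0 = g 0 + (N:ℤ) * m0 + ((0:ℕ):ℤ) * n := by
        rw [hg0, hN]
        push_cast
        linear_combination hc
      rw [heq2]
      exact hH_mk 0 N 0
    have hnAp : ¬ inAp p m0 d n (g t0) := fun hAp => hAp.2 hmem
    have := hu.2 hnAp
    omega
  have hzeq : z' = z := by
    have heqz : (μ':ℤ) * m0 + g z' = (μ:ℤ) * m0 + g z := by
      rw [← hvn']; linarith [hzrep]
    rcases lt_trichotomy z' z with h | h | h
    · exact absurd (claimZ z' μ' z μ hzu heqz h) (fun x => x)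
    · exact h
    · exact absurd (claimZ z μ z' μ' hz'u heqz.symm h) (fun x => x)
  have hμeq : μ' = μ := by
    have heqz : (μ':ℤ) * m0 + g z' = (μ:ℤ) * m0 + g z := by
      rw [← hvn']; linarith [hzrep]
    rw [hzeq] at heqz
    have : (μ':ℤ) = (μ:ℤ) := by
      have := mul_right_cancel₀ (ne_of_gt hm0) (by linarith : (μ':ℤ) * m0 = (μ:ℤ) * m0)
      exact this
    exact_mod_cast this
  simp only [Prod.mk.injEq]
  exact ⟨hzeq, hweq, hlameq, hμeq⟩
end

section
/- In the setting of a numerical semigroup H = ⟨m_0,…,m_p,n⟩ generated by an almost arithmetic sequence, with u, v, z, w, λ, μ as defined (g_u = λm_0 + wn, vn = μm_0 + g_z), one has g_{u−z} + (v−w)n = ν m_0 where ν = λ + μ + ε, with ε = 1 if r_{u−z} < r_u and ε = 0 if r_{u−z} ≥ r_u. -/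
/-- in the almost-arithmetic setting, with `g_u = λ m_0 + w n` and
`v n = μ m_0 + g_z`, one has `g_{u−z} + (v−w) n = ν m_0` where
`ν = λ + μ + ε`, `ε = 1` if `r_{u−z} < r_u` and `ε = 0` otherwise. -/
theorem stmt_5 (p : ℕ) (hp : 0 < p) (m0 d n : ℤ)
    (hm0 : 0 < m0) (hd : 0 < d) (hn : 0 < n)
    (hgcd : ∃ x y z : ℤ, x * m0 + y * d + z * n = 1)
    (g : ℕ → ℤ) (hg : gChar p m0 d g)
    (u v : ℕ)
    (hu : IsLeast {t : ℕ | ¬ inAp p m0 d n (g t)} u)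
    (hv : IsLeast {b : ℕ | 1 ≤ b ∧ inSpan p m0 d ((b : ℤ) * n)} v)
    (z w : ℕ) (lam mu : ℤ)
    (hzu : z < u) (hwv : w < v) (hlam : 1 ≤ lam) (hmu : 0 ≤ mu)
    (hgu : g u = lam * m0 + (w : ℤ) * n)
    (hvn : (v : ℤ) * n = mu * m0 + g z)
    (q r q' r' : ℤ)
    (hr1 : 1 ≤ r) (hr2 : r ≤ (p : ℤ)) (hqu : (u : ℤ) = q * p + r)
    (hr'1 : 1 ≤ r') (hr'2 : r' ≤ (p : ℤ)) (hq' : ((u - z : ℕ) : ℤ) = q' * p + r') :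
    g (u - z) + ((v : ℤ) - (w : ℤ)) * n =
      (lam + mu + (if r' < r then 1 else 0)) * m0 := by
  have uniq : ∀ q1 r1 q2 r2 : ℤ, 1 ≤ r1 → r1 ≤ (p:ℤ) → 1 ≤ r2 → r2 ≤ (p:ℤ) →
      q1 * p + r1 = q2 * p + r2 → q1 = q2 := by
    intro q1 r1 q2 r2 h1 h2 h3 h4 h
    by_contra hq
    rcases lt_or_gt_of_ne hq with h' | h'
    · have : (q1 + 1) * (p:ℤ) ≤ q2 * p :=
        mul_le_mul_of_nonneg_right (by linarith) (by exact_mod_cast hp.le)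
      nlinarith
    · have : (q2 + 1) * (p:ℤ) ≤ q1 * p :=
        mul_le_mul_of_nonneg_right (by linarith) (by exact_mod_cast hp.le)
      nlinarith
  -- g u
  obtain ⟨q1, r1, h11, h12, h13, h14⟩ := hg u
  have hq1 : q1 = q := uniq q1 r1 q r h11 h12 hr1 hr2 (by linarith)
  have hr1eq : r1 = r := by
    have hh : q1 * (p:ℤ) = q * p := by rw [hq1]
    linarith [h13, hqu]
  have hgu2 : g u = (q + 1) * m0 + (u : ℤ) * d := by
    rw [h14, hq1, hr1eq]; linear_combination (-d) * hqu
  -- g (u - z)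
  obtain ⟨q2, r2, h21, h22, h23, h24⟩ := hg (u - z)
  have hq2 : q2 = q' := uniq q2 r2 q' r' h21 h22 hr'1 hr'2 (by linarith)
  have hr2eq : r2 = r' := by
    have hh : q2 * (p:ℤ) = q' * p := by rw [hq2]
    linarith [h23, hq']
  have hcast : ((u - z : ℕ) : ℤ) = (u : ℤ) - (z : ℤ) := by
    have := hzu.le; push_cast [Nat.cast_sub this]; ring
  have hguz : g (u - z) = (q' + 1) * m0 + ((u : ℤ) - (z : ℤ)) * d := by
    rw [h24, hq2, hr2eq]; linear_combination (-d) * hq' + (-d) * hcast.symm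
  -- g z
  obtain ⟨qz, rz, hz1, hz2, hz3, hz4⟩ := hg z
  have hgz : g z = (qz + 1) * m0 + (z : ℤ) * d := by
    rw [hz4]; linear_combination (-d) * hz3
  have hzval : (z : ℤ) = (q - q') * p + (r - r') := by
    have : (u : ℤ) - (z : ℤ) = q' * p + r' := by rw [← hcast]; exact hq'
    linarith [hqu]
  have hqz : qz = q - q' - 1 + (if r' < r then 1 else 0) := by
    by_cases hcase : r' < r
    · simp only [if_pos hcase]
      have : qz = q - q' :=
        uniq qz rz (q - q') (r - r') hz1 hz2 (by linarith) (by linarith)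
          (by linarith [hz3, hzval])
      linarith
    · push_neg at hcase
      simp only [if_neg (not_lt.mpr hcase)]
      have : qz = q - q' - 1 :=
        uniq qz rz (q - q' - 1) (r - r' + p) hz1 hz2 (by linarith) (by linarith)
          (by linarith [hz3, hzval])
      linarith
  by_cases hcase : r' < r
  · simp only [if_pos hcase] at hqz ⊢
    linear_combination hguz + hvn + hgu - hgu2 + hgz + m0 * hqz
  · simp only [if_neg hcase] at hqz ⊢
    linear_combination hguz + hvn + hgu - hgu2 + hgz + m0 * hqz
end

section
/- In the almost-arithmetic setting, if μ = 0 (i.e., vn = g_z), then z > p and q' < q. -/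
/-- in the almost-arithmetic setting, if `μ = 0` (i.e. `v n = g_z`)
then `z > p` and `q' < q`. -/
theorem stmt_8 (p : ℕ) (hp : 0 < p) (m0 d n : ℤ)
    (hm0 : 0 < m0) (hd : 0 < d) (hn : 0 < n)
    (hgcd : ∃ x y z : ℤ, x * m0 + y * d + z * n = 1)
    (hmin : MinGen p m0 d n)
    (g : ℕ → ℤ) (hg : gChar p m0 d g)
    (u v : ℕ)
    (hu : IsLeast {t : ℕ | ¬ inAp p m0 d n (g t)} u)
    (hv : IsLeast {b : ℕ | 1 ≤ b ∧ inSpan p m0 d ((b : ℤ) * n)} v)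
    (z w : ℕ) (lam mu : ℤ)
    (hzu : z < u) (hwv : w < v) (hlam : 1 ≤ lam) (hmu : 0 ≤ mu)
    (hgu : g u = lam * m0 + (w : ℤ) * n)
    (hvn : (v : ℤ) * n = mu * m0 + g z)
    (hmu0 : mu = 0)
    (q r q' r' : ℤ)
    (hr1 : 1 ≤ r) (hr2 : r ≤ (p : ℤ)) (hqu : (u : ℤ) = q * p + r)
    (hr'1 : 1 ≤ r') (hr'2 : r' ≤ (p : ℤ)) (hq' : ((u - z : ℕ) : ℤ) = q' * p + r') :
    p < z ∧ q' < q := by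
  subst hmu0
  have hpZ : (1:ℤ) ≤ (p:ℤ) := by exact_mod_cast hp
  have hvZ : (1:ℤ) ≤ (v:ℤ) := by exact_mod_cast hv.1.1
  have hvn' : (v:ℤ) * n = g z := by linarith [hvn]
  -- first: p < z
  have hpz : p < z := by
    by_contra hle
    push_neg at hle
    obtain ⟨q1, r1, h11, h12, h13, h14⟩ := hg z
    rcases Nat.eq_zero_or_pos z with hz0 | hz1
    · subst hz0
      simp only [Nat.cast_zero] at h13
      have hq1 : q1 = -1 := by
        rcases lt_trichotomy q1 (-1) with h | h | h
        · have h2 : q1 * (p:ℤ) ≤ -2 * (p:ℤ) :=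
            mul_le_mul_of_nonneg_right (by linarith) (by linarith)
          linarith
        · exact h
        · have h2 : 0 ≤ q1 * (p:ℤ) := mul_nonneg (by linarith) (by linarith)
          linarith
      have hr1p : r1 = (p:ℤ) := by rw [hq1] at h13; linarith
      have : g 0 = 0 := by rw [h14, hq1, hr1p]; ring
      rw [this] at hvn'
      have h2 : (1:ℤ) * n ≤ (v:ℤ) * n := mul_le_mul_of_nonneg_right hvZ hn.le
      linarith
    · have hzZ : (1:ℤ) ≤ (z:ℤ) := by exact_mod_cast hz1
      have hzp : (z:ℤ) ≤ (p:ℤ) := by exact_mod_cast hle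
      have hq10 : q1 = 0 := by
        rcases lt_trichotomy q1 0 with h | h | h
        · have h2 : q1 * (p:ℤ) ≤ -1 * (p:ℤ) :=
            mul_le_mul_of_nonneg_right (by linarith) (by linarith)
          linarith
        · exact h
        · have h2 : 1 * (p:ℤ) ≤ q1 * (p:ℤ) :=
            mul_le_mul_of_nonneg_right (by linarith) (by linarith)
          linarith
      have hr1z : r1 = (z:ℤ) := by rw [hq10] at h13; linarith
      have hgz : g z = m0 + (z:ℤ) * d := by rw [h14, hq10, hr1z]; ring
      refine hmin.1 ⟨z, by omega⟩ ⟨fun _ => 0, v, rfl, ?_⟩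
      simp only [Nat.cast_zero, zero_mul, Finset.sum_const_zero, zero_add]
      rw [hvn', hgz]
  refine ⟨hpz, ?_⟩
  -- now q' < q
  have hsub : ((u - z : ℕ) : ℤ) = (u:ℤ) - (z:ℤ) := by
    have : z ≤ u := hzu.le
    push_cast [this]; ring
  rw [hsub] at hq'
  have hzZ : (p:ℤ) + 1 ≤ (z:ℤ) := by exact_mod_cast hpz
  have hlt : q' * (p:ℤ) < q * (p:ℤ) := by linarith
  exact lt_of_mul_lt_mul_right hlt (by linarith)
end

section
/- Let W = ∅, r = 1, λ > 1. For k ∈ [1,p] and j with p−k+1 < j ≤ p, the element γ_k = g_{(q−1)p+k} + (v−1)n − m_0 satisfies γ_k + m_j = (λ−2)m_0 + m_{k+j−p−1} + (w+v−1)n, and γ_k + m_{p−k+1} = (λ−1)m_0 + (w+v−1)n. -/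

lemma uniq_qr (P q1 r1 q2 r2 : ℤ) (hP : 0 < P)
    (h11 : 1 ≤ r1) (h12 : r1 ≤ P) (h21 : 1 ≤ r2) (h22 : r2 ≤ P)
    (he : q1 * P + r1 = q2 * P + r2) : r1 = r2 ∧ q1 = q2 := by
  have hd : P ∣ (r1 - r2) := ⟨q2 - q1, by linarith⟩
  have h0 : r1 - r2 = 0 := Int.eq_zero_of_abs_lt_dvd hd
    (abs_lt.mpr ⟨by linarith, by linarith⟩)
  constructor
  · linarith
  · have : (q1 - q2) * P = 0 := by linarith
    rcases mul_eq_zero.mp this with h | h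
    · linarith
    · exact absurd h (by linarith)

/-- let `W = ∅`, `r = 1`, `λ > 1`. For `k ∈ [1,p]`,
`γ_k + m_{p−k+1} = (λ−1)m_0 + (w+v−1)n`, and for `p−k+1 < j ≤ p`,
`γ_k + m_j = (λ−2)m_0 + m_{k+j−p−1} + (w+v−1)n`, where
`γ_k = g_{(q−1)p+k} + (v−1)n − m_0`. -/
theorem stmt_11 (p : ℕ) (hp : 0 < p) (m0 d n : ℤ)
    (hm0 : 0 < m0) (hd : 0 < d) (hn : 0 < n)
    (hgcd : ∃ x y z : ℤ, x * m0 + y * d + z * n = 1)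
    (hmin : MinGen p m0 d n)
    (g : ℕ → ℤ) (hg : gChar p m0 d g)
    (u v : ℕ)
    (hu : IsLeast {t : ℕ | ¬ inAp p m0 d n (g t)} u)
    (hv : IsLeast {b : ℕ | 1 ≤ b ∧ inSpan p m0 d ((b : ℤ) * n)} v)
    (z w : ℕ) (lam mu : ℤ)
    (hzu : z < u) (hwv : w < v) (hmu : 0 ≤ mu)
    (hgu : g u = lam * m0 + (w : ℤ) * n)
    (hvn : (v : ℤ) * n = mu * m0 + g z)
    (hlam : 1 < lam)
    (q : ℕ) (hq1 : 1 ≤ q) (hqu : (u : ℤ) = (q : ℤ) * p + 1)  -- r = 1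
    (hW : z = 0 ∨ w = 0) :                                   -- W = ∅
    ∀ k : ℕ, 1 ≤ k → k ≤ p →
      ((g ((q - 1) * p + k) + ((v : ℤ) - 1) * n - m0) +
          (m0 + ((p - k + 1 : ℕ) : ℤ) * d) =
        (lam - 1) * m0 + ((w : ℤ) + (v : ℤ) - 1) * n) ∧
      (∀ j : ℕ, p - k + 1 < j → j ≤ p →
        (g ((q - 1) * p + k) + ((v : ℤ) - 1) * n - m0) + (m0 + (j : ℤ) * d) =
          (lam - 2) * m0 + (m0 + ((k + j - p - 1 : ℕ) : ℤ) * d) +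
            ((w : ℤ) + (v : ℤ) - 1) * n) := by
  intro k hk1 hkp
  -- value of g u
  obtain ⟨qu', ru', hru1, hru2, hequ, hvalu⟩ := hg u
  have hPpos : (0 : ℤ) < (p : ℤ) := by exact_mod_cast hp
  obtain ⟨hr1, hq1'⟩ := uniq_qr (p : ℤ) qu' ru' (q : ℤ) 1 hPpos hru1 hru2 le_rfl hPpos
    (by rw [← hequ, hqu])
  rw [hr1, hq1'] at hvalu
  have hgu' : (q : ℤ) * (m0 + (p : ℤ) * d) + (m0 + d) = lam * m0 + (w : ℤ) * n := by
    rw [← hgu, hvalu]; ring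
  -- value of g ((q-1)*p+k)
  obtain ⟨qt, rt, hrt1, hrt2, heqt, hvalt⟩ := hg ((q - 1) * p + k)
  have hcz : (((q - 1) * p + k : ℕ) : ℤ) = ((q : ℤ) - 1) * (p : ℤ) + (k : ℤ) := by
    have h1 : ((q - 1 : ℕ) : ℤ) = (q : ℤ) - 1 := by omega
    push_cast
    rw [h1]
  obtain ⟨hrk, hqk⟩ := uniq_qr (p : ℤ) qt rt ((q : ℤ) - 1) (k : ℤ) hPpos hrt1 hrt2
    (by exact_mod_cast hk1) (by exact_mod_cast hkp) (by rw [← heqt, hcz])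
  rw [hrk, hqk] at hvalt
  constructor
  · have hc1 : ((p - k + 1 : ℕ) : ℤ) = (p : ℤ) - (k : ℤ) + 1 := by omega
    rw [hvalt, hc1]
    linear_combination hgu'
  · intro j hj1 hj2
    have hc2 : ((k + j - p - 1 : ℕ) : ℤ) = (k : ℤ) + (j : ℤ) - (p : ℤ) - 1 := by omega
    rw [hvalt, hc2]
    linear_combination hgu'
end

section
/- Let W = ∅, r = 1, λ > 1 and μ > 0. Then for each k ∈ [1,p], γ_k + n = (μ−1)m_0 + m_k + m_{r_z} + (q + q_z − 1)m_p, where γ_k = g_{(q−1)p+k} + (v−1)n − m_0. -/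
lemma unique_dec (p : ℕ) (hp : 0 < p) (q1 r1 q2 r2 : ℤ)
    (h1a : 1 ≤ r1) (h1b : r1 ≤ (p : ℤ)) (h2a : 1 ≤ r2) (h2b : r2 ≤ (p : ℤ))
    (heq : q1 * p + r1 = q2 * p + r2) : q1 = q2 ∧ r1 = r2 := by
  have hp' : (0 : ℤ) < (p : ℤ) := by exact_mod_cast hp
  have hq : q1 = q2 := by
    rcases lt_trichotomy q1 q2 with h | h | h
    · have h2 : q1 - q2 ≤ -1 := by linarith
      have h3 := mul_le_mul_of_nonneg_right h2 (le_of_lt hp')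
      nlinarith
    · exact h
    · have h2 : (1 : ℤ) ≤ q1 - q2 := by linarith
      have h3 := mul_le_mul_of_nonneg_right h2 (le_of_lt hp')
      nlinarith
  exact ⟨hq, by rw [hq] at heq; linarith⟩

/-- let `W = ∅`, `r = 1`, `λ > 1`, `μ > 0`. Then for `k ∈ [1,p]`,
`γ_k + n = (μ−1)m_0 + m_k + m_{r_z} + (q + q_z − 1)m_p`, where
`γ_k = g_{(q−1)p+k} + (v−1)n − m_0` and `z = q_z p + r_z`, `r_z ∈ [1,p]`. -/
theorem stmt_12 (p : ℕ) (hp : 0 < p) (m0 d n : ℤ)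
    (hm0 : 0 < m0) (hd : 0 < d) (hn : 0 < n)
    (hgcd : ∃ x y z : ℤ, x * m0 + y * d + z * n = 1)
    (hmin : MinGen p m0 d n)
    (g : ℕ → ℤ) (hg : gChar p m0 d g)
    (u v : ℕ)
    (hu : IsLeast {t : ℕ | ¬ inAp p m0 d n (g t)} u)
    (hv : IsLeast {b : ℕ | 1 ≤ b ∧ inSpan p m0 d ((b : ℤ) * n)} v)
    (z w : ℕ) (lam mu : ℤ)
    (hzu : z < u) (hwv : w < v)
    (hgu : g u = lam * m0 + (w : ℤ) * n)
    (hvn : (v : ℤ) * n = mu * m0 + g z)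
    (hlam : 1 < lam) (hmupos : 0 < mu)
    (q : ℕ) (hq1 : 1 ≤ q) (hqu : (u : ℤ) = (q : ℤ) * p + 1)  -- r = 1
    (hW : z = 0 ∨ w = 0)                                     -- W = ∅
    (qz rz : ℤ) (hrz1 : 1 ≤ rz) (hrz2 : rz ≤ (p : ℤ))
    (hzdec : (z : ℤ) = qz * p + rz) :
    ∀ k : ℕ, 1 ≤ k → k ≤ p →
      (g ((q - 1) * p + k) + ((v : ℤ) - 1) * n - m0) + n =
        (mu - 1) * m0 + (m0 + (k : ℤ) * d) + (m0 + rz * d) +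
          ((q : ℤ) + qz - 1) * (m0 + (p : ℤ) * d) := by
  intro k hk1 hkp
  obtain ⟨q', r', hr1, hr2, ht, hgt⟩ := hg ((q - 1) * p + k)
  obtain ⟨qz', rz', hz1, hz2, htz, hgz⟩ := hg z
  have hcast : (((q - 1) * p + k : ℕ) : ℤ) = ((q : ℤ) - 1) * p + k := by
    push_cast [Nat.cast_sub hq1]
    ring
  rw [hcast] at ht
  have hk1' : (1 : ℤ) ≤ (k : ℤ) := by exact_mod_cast hk1
  have hkp' : (k : ℤ) ≤ (p : ℤ) := by exact_mod_cast hkp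
  obtain ⟨e1, e2⟩ := unique_dec p hp q' r' ((q : ℤ) - 1) (k : ℤ) hr1 hr2 hk1' hkp' ht.symm
  obtain ⟨e3, e4⟩ := unique_dec p hp qz' rz' qz rz hz1 hz2 hrz1 hrz2 (by rw [← htz]; exact hzdec)
  rw [e1, e2] at hgt
  rw [e3, e4] at hgz
  rw [hgz] at hvn
  linear_combination hgt + hvn
end

section
/- Suppose p = 1, W = ∅, λ = 1 (so H = ⟨m_0, m_1, n⟩). Then PF(H) = {γ_1} where γ_1 = (u−1)m_1 + (v−1)n − m_0, and γ_1 + m_0 = (u−1)m_1 + (v−1)n, γ_1 + m_1 = μm_0 + (w−1)n, γ_1 + n = (μ−1)m_0 + q·m_1; i.e., the matrix with rows (−1, u−1, v−1), (μ, −1, w−1), (μ−1, q, −1) is an RF-matrix for γ_1. -/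
set_option maxHeartbeats 1000000 in
/-- suppose `p = 1`, `W = ∅`, `λ = 1` (so `H = ⟨m_0, m_1, n⟩`,
`m_1 = m_0 + d`). Then `PF(H) = {γ_1}` with
`γ_1 = (u−1)m_1 + (v−1)n − m_0`, and `γ_1 + m_0 = (u−1)m_1 + (v−1)n`,
`γ_1 + m_1 = μ m_0 + (w−1)n`, `γ_1 + n = (μ−1)m_0 + q m_1` (`q = u−1`);
i.e. the matrix with rows `(−1,u−1,v−1)`, `(μ,−1,w−1)`, `(μ−1,q,−1)` is an
RF-matrix for `γ_1`. -/
theorem stmt_13 (m0 d n : ℤ)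
    (hm0 : 0 < m0) (hd : 0 < d) (hn : 0 < n)
    (hgcd : ∃ x y z : ℤ, x * m0 + y * d + z * n = 1)
    (hmin : MinGen 1 m0 d n)
    (g : ℕ → ℤ) (hg : gChar 1 m0 d g)
    (u v : ℕ)
    (hu : IsLeast {t : ℕ | ¬ inAp 1 m0 d n (g t)} u)
    (hv : IsLeast {b : ℕ | 1 ≤ b ∧ inSpan 1 m0 d ((b : ℤ) * n)} v)
    (z w : ℕ) (mu : ℤ)
    (hzu : z < u) (hwv : w < v) (hmu : 0 ≤ mu)
    (hgu : g u = m0 + (w : ℤ) * n)                     -- λ = 1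
    (hvn : (v : ℤ) * n = mu * m0 + g z)
    (hW : z = 0 ∨ w = 0) :                             -- W = ∅
    (∀ f : ℤ, isPF 1 m0 d n f ↔
        f = ((u : ℤ) - 1) * (m0 + d) + ((v : ℤ) - 1) * n - m0) ∧
    (((u : ℤ) - 1) * (m0 + d) + ((v : ℤ) - 1) * n - m0) + m0 =
        ((u : ℤ) - 1) * (m0 + d) + ((v : ℤ) - 1) * n ∧
    (((u : ℤ) - 1) * (m0 + d) + ((v : ℤ) - 1) * n - m0) + (m0 + d) =
        mu * m0 + ((w : ℤ) - 1) * n ∧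
    (((u : ℤ) - 1) * (m0 + d) + ((v : ℤ) - 1) * n - m0) + n =
        (mu - 1) * m0 + ((u : ℤ) - 1) * (m0 + d) := by
  obtain ⟨hu1, hu2⟩ := hu
  obtain ⟨⟨hv1, hv2⟩, hv3⟩ := hv
  set M : ℤ := m0 + d with hMdef
  have hM0 : 0 < M := by simp [hMdef]; linarith
  -- g t = t * M
  have hgt : ∀ t : ℕ, g t = (t : ℤ) * M := by
    intro t
    obtain ⟨q, r, hr1, hr2, hqr, hgeq⟩ := hg t
    have hr : r = 1 := le_antisymm (by exact_mod_cast hr2) hr1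
    subst hr
    rw [hgeq]
    push_cast at hqr ⊢
    simp [hMdef]; nlinarith [hqr]
  -- builders / destructors
  have memH' : ∀ x : ℤ, (∃ a b c : ℕ, x = (a:ℤ)*m0 + (b:ℤ)*M + (c:ℤ)*n) →
      inH 1 m0 d n x := by
    rintro x ⟨a, b, c, rfl⟩
    exact ⟨![a, b], c, by simp [Fin.sum_univ_two, hMdef]⟩
  have destH : ∀ x : ℤ, inH 1 m0 d n x →
      ∃ a b c : ℕ, x = (a:ℤ)*m0 + (b:ℤ)*M + (c:ℤ)*n := by
    rintro x ⟨a, c, rfl⟩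
    exact ⟨a 0, a 1, c, by simp [Fin.sum_univ_two, hMdef]⟩
  have memS' : ∀ x : ℤ, (∃ a b : ℕ, x = (a:ℤ)*m0 + (b:ℤ)*M) → inSpan 1 m0 d x := by
    rintro x ⟨a, b, rfl⟩
    exact ⟨![a, b], by simp [Fin.sum_univ_two, hMdef]⟩
  have Hnonneg : ∀ x : ℤ, inH 1 m0 d n x → 0 ≤ x := by
    intro x hx
    obtain ⟨a, b, c, rfl⟩ := destH x hx
    have h1 : (0:ℤ) ≤ (a:ℤ) * m0 := mul_nonneg (by positivity) hm0.le
    have h2 : (0:ℤ) ≤ (b:ℤ) * M := mul_nonneg (by positivity) hM0.le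
    have h3 : (0:ℤ) ≤ (c:ℤ) * n := mul_nonneg (by positivity) hn.le
    linarith
  -- basic bounds
  have hu1' : ¬ inAp 1 m0 d n (g u) := hu1
  have hupos : 1 ≤ u := by
    by_contra h
    have hu0 : u = 0 := by omega
    apply hu1'
    rw [hu0, hgt]
    constructor
    · exact memH' _ ⟨0, 0, 0, by push_cast; ring⟩
    · intro hc
      have := Hnonneg _ hc
      push_cast at this
      linarith
  have Rel1 : (u:ℤ) * M = m0 + (w:ℤ) * n := by rw [← hgt]; exact hgu
  have hwpos : 1 ≤ w := by
    by_contra h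
    have hw0 : (w:ℤ) = 0 := by exact_mod_cast (by omega : w = 0)
    rw [hw0] at Rel1
    have : (1:ℤ) ≤ (u:ℤ) := by exact_mod_cast hupos
    nlinarith
  have hz0 : z = 0 := by
    rcases hW with h | h
    · exact h
    · omega
  have Rel2 : (v:ℤ) * n = mu * m0 := by
    have := hvn
    rw [hz0, hgt] at this
    push_cast at this
    linarith
  have hmupos : 1 ≤ mu := by
    have hvpos : (1:ℤ) ≤ (v:ℤ) := by exact_mod_cast hv1
    nlinarith
  -- reduction
  have red : ∀ N a b c : ℕ, b * v + c ≤ N → ∃ a' b' c' : ℕ, b' < u ∧ c' < v ∧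
      (a:ℤ)*m0 + (b:ℤ)*M + (c:ℤ)*n = (a':ℤ)*m0 + (b':ℤ)*M + (c':ℤ)*n := by
    intro N
    induction N with
    | zero =>
      intro a b c h
      have hb : b = 0 := by
        by_contra hb
        have : 1 ≤ b * v := Nat.one_le_iff_ne_zero.2 (by positivity)
        omega
      have hc : c = 0 := by omega
      exact ⟨a, 0, 0, hupos, hv1, by rw [hb, hc]⟩
    | succ N ih =>
      intro a b c h
      by_cases hb : b < u
      · by_cases hc : c < v
        · exact ⟨a, b, c, hb, hc, rfl⟩
        · push_neg at hc
          obtain ⟨a', b', c', h1, h2, h3⟩ := ih (a + mu.toNat) b (c - v) (by omega)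
          refine ⟨a', b', c', h1, h2, ?_⟩
          rw [← h3]
          have hcv : ((c - v : ℕ) : ℤ) = (c:ℤ) - v := by
            push_cast [Nat.cast_sub hc]; ring
          have hmt : ((mu.toNat : ℤ)) = mu := Int.toNat_of_nonneg hmu
          push_cast [hcv, hmt]
          linarith [Rel2]
      · push_neg at hb
        have huv : v ≤ u * v := Nat.le_mul_of_pos_left v hupos
        have e : (b - u) * v + u * v = b * v := by
          rw [← Nat.add_mul]; congr 1; omega
        obtain ⟨a', b', c', h1, h2, h3⟩ := ih (a + 1) (b - u) (c + w) (by omega)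
        refine ⟨a', b', c', h1, h2, ?_⟩
        rw [← h3]
        have hbu : ((b - u : ℕ) : ℤ) = (b:ℤ) - u := by
          push_cast [Nat.cast_sub hb]; ring
        push_cast [hbu]
        linarith [Rel1]
  have redH : ∀ x : ℤ, inH 1 m0 d n x → ∃ a b c : ℕ, b < u ∧ c < v ∧
      x = (a:ℤ)*m0 + (b:ℤ)*M + (c:ℤ)*n := by
    intro x hx
    obtain ⟨a, b, c, rfl⟩ := destH x hx
    obtain ⟨a', b', c', h1, h2, h3⟩ := red (b * v + c) a b c le_rfl
    exact ⟨a', b', c', h1, h2, h3⟩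
  -- key minimality lemmas
  have LemA : ∀ B : ℕ, inH 1 m0 d n ((B:ℤ) * M - m0) → u ≤ B := by
    intro B hB
    apply hu2
    intro hAp
    rw [hgt] at hAp
    exact hAp.2 hB
  have LemB : ∀ C : ℕ, 1 ≤ C → inSpan 1 m0 d ((C:ℤ) * n) → v ≤ C := by
    intro C h1 h2
    exact hv3 ⟨h1, h2⟩
  -- core lemma
  have core : ∀ A B C : ℕ, 1 ≤ A → B < u → C < v →
      (B:ℤ)*M + (C:ℤ)*n ≠ (A:ℤ)*m0 := by
    intro A B C hA hB hC heq
    have hA1 : (1:ℤ) ≤ (A:ℤ) := by exact_mod_cast hA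
    by_cases hC0 : C = 0
    · -- B*M = A*m0
      subst hC0
      have hBpos : 1 ≤ B := by
        by_contra h
        have hB0 : (B:ℤ) = 0 := by exact_mod_cast (by omega : B = 0)
        rw [hB0] at heq
        push_cast at heq
        nlinarith
      have : inH 1 m0 d n ((B:ℤ)*M - m0) := by
        apply memH'
        refine ⟨A - 1, 0, 0, ?_⟩
        have : ((A - 1 : ℕ) : ℤ) = (A:ℤ) - 1 := by push_cast [Nat.cast_sub hA]; ring
        rw [this]
        push_cast at heq ⊢
        linarith
      exact absurd (LemA B this) (by omega)
    · by_cases hB0 : B = 0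
      · subst hB0
        have : inSpan 1 m0 d ((C:ℤ)*n) := by
          apply memS'
          exact ⟨A, 0, by push_cast at heq ⊢; linarith⟩
        exact absurd (LemB C (by omega) this) (by omega)
      · -- B ≥ 1, C ≥ 1
        have hB1 : 1 ≤ B := by omega
        have key1 : ((w:ℤ) + C) * n = ((A:ℤ) - 1) * m0 + ((u:ℤ) - B) * M := by
          linarith [Rel1]
        have hwC : v ≤ w + C := by
          apply LemB _ (by omega)
          apply memS'
          refine ⟨A - 1, u - B, ?_⟩
          push_cast [Nat.cast_sub hA, Nat.cast_sub hB.le]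
          linarith [key1]
        obtain ⟨A2, hA2def⟩ : ∃ t : ℤ, t = (A:ℤ) - 1 - mu := ⟨_, rfl⟩
        have key2 : ((w:ℤ) + C - v) * n = A2 * m0 + ((u:ℤ) - B) * M := by
          rw [hA2def]
          linarith [Rel2, key1]
        have hBub : (1:ℤ) ≤ (u:ℤ) - B := by
          have : (B:ℤ) + 1 ≤ (u:ℤ) := by exact_mod_cast hB
          linarith
        by_cases hA2 : 0 ≤ A2
        · by_cases hC2 : w + C - v = 0
          · have hC2' : (w:ℤ) + C - v = 0 := by omega
            have key3 : (0:ℤ) = A2 * m0 + ((u:ℤ) - B) * M := by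
              linear_combination key2 - n * hC2'
            have h4 : M ≤ ((u:ℤ) - B) * M := le_mul_of_one_le_left hM0.le hBub
            linarith [mul_nonneg hA2 hm0.le, key3, h4]
          · have : inSpan 1 m0 d (((w + C - v : ℕ):ℤ) * n) := by
              apply memS'
              refine ⟨A2.toNat, u - B, ?_⟩
              push_cast [Nat.cast_sub hwC, Nat.cast_sub hB.le, Int.toNat_of_nonneg hA2]
              linarith [key2]
            have := LemB _ (by omega) this
            omega
        · push_neg at hA2
          have : inH 1 m0 d n (((u - B : ℕ):ℤ) * M - m0) := by
            apply memH'
            refine ⟨(-A2 - 1).toNat, 0, w + C - v, ?_⟩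
            push_cast [Nat.cast_sub hwC, Nat.cast_sub hB.le,
              Int.toNat_of_nonneg (by omega : (0:ℤ) ≤ -A2 - 1)]
            linarith [key2]
          have := LemA _ this
          omega
  -- Claim A : Apery property
  have claimA : ∀ b c : ℕ, b < u → c < v → ¬ inH 1 m0 d n ((b:ℤ)*M + (c:ℤ)*n - m0) := by
    intro b c hb hc hmem
    obtain ⟨a', b', c', hb', hc', heq⟩ := redH _ hmem
    -- b*M + c*n = (a'+1)*m0 + b'*M + c'*n
    have heq2 : (b:ℤ)*M + (c:ℤ)*n = ((a':ℤ)+1)*m0 + (b':ℤ)*M + (c':ℤ)*n := by linarith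
    rcases le_or_gt b' b with h1 | h1
    · rcases le_or_gt c' c with h2 | h2
      · apply core (a' + 1) (b - b') (c - c') (by omega) (by omega) (by omega)
        push_cast [Nat.cast_sub h1, Nat.cast_sub h2]
        linarith
      · -- (b-b')*M - m0 = a'*m0 + (c'-c)*n ∈ H
        have : inH 1 m0 d n (((b - b' : ℕ):ℤ) * M - m0) := by
          apply memH'
          refine ⟨a', 0, c' - c, ?_⟩
          push_cast [Nat.cast_sub h1, Nat.cast_sub h2.le]
          linarith
        have := LemA _ this
        omega
    · rcases le_or_gt c' c with h2 | h2
      · have hccpos : 1 ≤ c - c' := by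
          by_contra h
          have : c = c' := by omega
          subst this
          have hb1 : (b:ℤ) + 1 ≤ (b':ℤ) := by exact_mod_cast h1
          have h3 : (0:ℤ) ≤ (a':ℤ) * m0 := mul_nonneg (by positivity) hm0.le
          nlinarith
        have : inSpan 1 m0 d (((c - c' : ℕ):ℤ) * n) := by
          apply memS'
          refine ⟨a' + 1, b' - b, ?_⟩
          push_cast [Nat.cast_sub h2, Nat.cast_sub h1.le]
          linarith
        have := LemB _ hccpos this
        omega
      · have hb1 : (b:ℤ) + 1 ≤ (b':ℤ) := by exact_mod_cast h1
        have hc1 : (c:ℤ) + 1 ≤ (c':ℤ) := by exact_mod_cast h2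
        have h3 : (0:ℤ) ≤ (a':ℤ) * m0 := mul_nonneg (by positivity) hm0.le
        have h4 : ((b:ℤ) + 1) * M ≤ (b':ℤ) * M := mul_le_mul_of_nonneg_right hb1 hM0.le
        have h5 : ((c:ℤ) + 1) * n ≤ (c':ℤ) * n := mul_le_mul_of_nonneg_right hc1 hn.le
        nlinarith
  -- gamma
  set γ : ℤ := ((u:ℤ) - 1) * M + ((v:ℤ) - 1) * n - m0 with hγdef
  have hucast : ((u - 1 : ℕ):ℤ) = (u:ℤ) - 1 := by push_cast [Nat.cast_sub hupos]; ring
  have hvcast : ((v - 1 : ℕ):ℤ) = (v:ℤ) - 1 := by push_cast [Nat.cast_sub hv1]; ring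
  have hγnot : ¬ inH 1 m0 d n γ := by
    have := claimA (u - 1) (v - 1) (by omega) (by omega)
    rw [hucast, hvcast] at this
    rw [hγdef]
    exact this
  have hγPF : isPF 1 m0 d n γ := by
    constructor
    · exact hγnot
    · intro h hh hne
      obtain ⟨a, b, c, rfl⟩ := destH h hh
      have habc : ¬ (a = 0 ∧ b = 0 ∧ c = 0) := by
        rintro ⟨rfl, rfl, rfl⟩
        exact hne (by norm_num)
      apply memH'
      by_cases ha : 1 ≤ a
      · refine ⟨a - 1, u - 1 + b, v - 1 + c, ?_⟩
        push_cast [Nat.cast_sub ha, Nat.cast_sub hupos, Nat.cast_sub hv1]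
        simp only [hγdef]; ring
      · by_cases hb : 1 ≤ b
        · refine ⟨mu.toNat + a, b - 1, w - 1 + c, ?_⟩
          push_cast [Nat.cast_sub hb, Nat.cast_sub hwpos, Int.toNat_of_nonneg hmu]
          simp only [hγdef]
          linarith [Rel1, Rel2]
        · have hc : 1 ≤ c := by omega
          refine ⟨(mu - 1).toNat + a, u - 1 + b, c - 1, ?_⟩
          push_cast [Nat.cast_sub hc, Nat.cast_sub hupos,
            Int.toNat_of_nonneg (by linarith : (0:ℤ) ≤ mu - 1)]
          simp only [hγdef]
          linarith [Rel2]
  refine ⟨?_, by rw [hγdef]; ring, by rw [hγdef]; linear_combination Rel1 + Rel2,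
    by rw [hγdef]; linear_combination Rel2⟩
  intro f
  constructor
  · rintro ⟨hf1, hf2⟩
    -- f + m0 ∈ H
    have hm0H : inH 1 m0 d n m0 := memH' _ ⟨1, 0, 0, by push_cast; ring⟩
    have hMH : inH 1 m0 d n M := memH' _ ⟨0, 1, 0, by push_cast; ring⟩
    have hnH : inH 1 m0 d n n := memH' _ ⟨0, 0, 1, by push_cast; ring⟩
    have h1 := hf2 m0 hm0H (by linarith)
    obtain ⟨a, b, c, hb, hc, heq⟩ := redH _ h1
    have ha0 : a = 0 := by
      by_contra ha
      apply hf1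
      apply memH'
      refine ⟨a - 1, b, c, ?_⟩
      push_cast [Nat.cast_sub (by omega : 1 ≤ a)]
      linarith
    rw [ha0] at heq
    push_cast at heq
    have hf : f = (b:ℤ)*M + (c:ℤ)*n - m0 := by linarith
    have h2 := hf2 M hMH (by linarith)
    have h3 := hf2 n hnH (by linarith)
    have hbu : b = u - 1 := by
      by_contra hbne
      have hblt : b + 1 < u := by omega
      apply claimA (b + 1) c hblt hc
      have : f + M = ((b+1 : ℕ):ℤ)*M + (c:ℤ)*n - m0 := by push_cast; linarith
      rwa [← this]
    have hcv : c = v - 1 := by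
      by_contra hcne
      have hclt : c + 1 < v := by omega
      apply claimA b (c + 1) hb hclt
      have : f + n = (b:ℤ)*M + ((c+1 : ℕ):ℤ)*n - m0 := by push_cast; linarith
      rwa [← this]
    rw [hbu, hcv, hucast, hvcast] at hf
    rw [hγdef]
    exact hf
  · rintro rfl
    exact hγPF
end

section
/- Let W ≠ ∅, r' = 1, μ > 0, q' = 0, so PF_1(H) = {α_p} with α_p = (v−1)n − m_0. Then α_p + m_0 = (v−1)n; for j ∈ [1,p], α_p + m_j = (ν−2)m_0 + m_{j−1} + (w−1)n (with the convention m_0 appearing when j = 1 giving (ν−1)m_0 + (w−1)n); and α_p + n = (μ−1)m_0 + q_z m_p + m_{r_z}. -/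

lemma decomp_unique (p : ℕ) (hp : 0 < p) (q r q' r' : ℤ)
    (h1 : 1 ≤ r) (h2 : r ≤ (p:ℤ)) (h1' : 1 ≤ r') (h2' : r' ≤ (p:ℤ))
    (he : q * p + r = q' * p + r') : q = q' ∧ r = r' := by
  have hpz : (0:ℤ) < (p:ℤ) := by exact_mod_cast hp
  have hmul : (q - q') * p = r' - r := by ring_nf; linarith
  have hdvd : (p:ℤ) ∣ r' - r := ⟨q - q', by linarith [hmul]⟩
  have habs : |r' - r| < (p:ℤ) := abs_lt.2 ⟨by linarith, by linarith⟩
  have hz : r' - r = 0 := Int.eq_zero_of_abs_lt_dvd hdvd habs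
  have hr : r = r' := by linarith
  constructor
  · have : (q - q') * p = 0 := by rw [hmul, hz]
    rcases mul_eq_zero.1 this with h | h
    · linarith
    · exact absurd h (by linarith)
  · exact hr

/-- let `W ≠ ∅`, `r' = 1`, `μ > 0`, `q' = 0` (so `u − z = 1`),
and `α_p = (v−1)n − m_0`. Then `α_p + m_0 = (v−1)n`;
`α_p + m_1 = (ν−1)m_0 + (w−1)n`; for `j ∈ [2,p]`,
`α_p + m_j = (ν−2)m_0 + m_{j−1} + (w−1)n`; and
`α_p + n = (μ−1)m_0 + q_z m_p + m_{r_z}`. -/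
theorem stmt_15 (p : ℕ) (hp : 0 < p) (m0 d n : ℤ)
    (hm0 : 0 < m0) (hd : 0 < d) (hn : 0 < n)
    (hgcd : ∃ x y z : ℤ, x * m0 + y * d + z * n = 1)
    (hmin : MinGen p m0 d n)
    (g : ℕ → ℤ) (hg : gChar p m0 d g)
    (u v : ℕ)
    (hu : IsLeast {t : ℕ | ¬ inAp p m0 d n (g t)} u)
    (hv : IsLeast {b : ℕ | 1 ≤ b ∧ inSpan p m0 d ((b : ℤ) * n)} v)
    (z w : ℕ) (lam mu nu : ℤ)
    (hzu : z < u) (hwv : w < v) (hlam : 1 ≤ lam)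
    (hgu : g u = lam * m0 + (w : ℤ) * n)
    (hvn : (v : ℤ) * n = mu * m0 + g z)
    (hnu : g (u - z) + ((v : ℤ) - (w : ℤ)) * n = nu * m0)
    (hW : 1 ≤ z ∧ 1 ≤ w)                                 -- W ≠ ∅
    (hmupos : 0 < mu)                                    -- μ > 0
    (huz : u - z = 1)                                    -- r' = 1, q' = 0
    (qz rz : ℤ) (hrz1 : 1 ≤ rz) (hrz2 : rz ≤ (p : ℤ))
    (hzdec : (z : ℤ) = qz * p + rz) :
    (((v : ℤ) - 1) * n - m0) + m0 = ((v : ℤ) - 1) * n ∧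
    ((((v : ℤ) - 1) * n - m0) + (m0 + d) = (nu - 1) * m0 + ((w : ℤ) - 1) * n) ∧
    (∀ j : ℕ, 2 ≤ j → j ≤ p →
      (((v : ℤ) - 1) * n - m0) + (m0 + (j : ℤ) * d) =
        (nu - 2) * m0 + (m0 + ((j - 1 : ℕ) : ℤ) * d) + ((w : ℤ) - 1) * n) ∧
    (((v : ℤ) - 1) * n - m0) + n =
      (mu - 1) * m0 + qz * (m0 + (p : ℤ) * d) + (m0 + rz * d) := by
  -- g z = qz * m_p + m_{rz}
  obtain ⟨q, r, h1, h2, hdec, hgz⟩ := hg z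
  obtain ⟨hq, hr⟩ := decomp_unique p hp q r qz rz h1 h2 hrz1 hrz2 (by linarith [hdec, hzdec])
  subst hq hr
  -- g 1 = m0 + d
  obtain ⟨q1, r1, h11, h12, hdec1, hg1⟩ := hg (u - z)
  rw [huz] at hdec1 hg1
  obtain ⟨hq1, hr1⟩ := decomp_unique p hp q1 r1 0 1 h11 h12 le_rfl
    (by exact_mod_cast hp) (by push_cast at hdec1 ⊢; linarith)
  subst hq1 hr1
  simp only [zero_mul, zero_add, one_mul] at hg1
  rw [huz, hg1] at hnu
  refine ⟨by ring, by linarith, ?_, by linarith⟩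
  intro j hj2 hjp
  have : ((j - 1 : ℕ) : ℤ) = (j : ℤ) - 1 := by
    have : 1 ≤ j := by omega
    push_cast [this]; ring
  rw [this]
  linarith [mul_comm (nu:ℤ) m0]
end

section
/- Let p = 1 and μ > 0 (with W ≠ ∅). Then H = ⟨m_0, m_1, n⟩ has exactly two pseudo-Frobenius numbers α_1 and β_1 (so H is not symmetric), and the defining ideal I(H) = ⟨x_0^ν − x_1^{q'+1}x_2^{v−w}, x_1^{q+1} − x_0^λ x_2^w, x_2^v − x_0^μ x_1^{q−q'}⟩ is minimally generated by RF(β_1)-relations: with RF(β_1) having rows δ_1 = (−1, u−1, v−w−1), δ_2 = (λ−1, −1, v−1), δ_3 = (ν−1, z−1, −1), the three differences δ_2 − δ_1, δ_3 − δ_1, δ_3 − δ_2 yield (up to sign) the binomials x_1^u − x_0^λ x_2^w, x_0^ν − x_1^{u−z}x_2^{v−w}, x_2^v − x_0^μ x_1^z. -/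
open MvPolynomial

/-- Membership in `H = ⟨m0, m1, n⟩` (viewed in `ℤ`). -/
def inH3 (m0 m1 n x : ℤ) : Prop := ∃ a b c : ℕ, x = a * m0 + b * m1 + c * n

/-- Membership in `H' = ⟨m0, m1⟩`. -/
def inSp3 (m0 m1 x : ℤ) : Prop := ∃ a b : ℕ, x = a * m0 + b * m1

/-- `f` is a pseudo-Frobenius number of `H = ⟨m0, m1, n⟩`. -/
def isPF3 (m0 m1 n f : ℤ) : Prop :=
  ¬ inH3 m0 m1 n f ∧ ∀ h : ℤ, inH3 m0 m1 n h → h ≠ 0 → inH3 m0 m1 n (f + h)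

/-- The binomial `x^{δ⁺} − x^{δ⁻}` attached to the difference `δ = A j − A i`
of two rows of a matrix `A`. -/
noncomputable def rfBinom3 (k : Type*) [Field k] (A : Fin 3 → Fin 3 → ℤ)
    (i j : Fin 3) : MvPolynomial (Fin 3) k :=
  (∏ l, X l ^ (A j l - A i l).toNat) - ∏ l, X l ^ (A i l - A j l).toNat

/-!
Let `m₁ = m₀ + d` and let `L` be the box `[0, u) × [0, v)` minus its corner
`[u - z, u) × [v - w, v)`. The minimality of `u` and `v` shows `b·m₁ + c·n - m₀ ∉ H` for
`(b, c) ∈ L`, while outside `L` one of `u·m₁ = λ·m₀ + w·n`, `v·n = μ·m₀ + z·m₁` and their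
sum `(u - z)·m₁ + (v - w)·n = (λ + μ)·m₀` (so `ν = λ + μ`) puts it back into `H`. Hence
`Ap(H, m₀) = {b·m₁ + c·n : (b, c) ∈ L}` with unique representations, and the pseudo-Frobenius
numbers are `b·m₁ + c·n - m₀` for the two maximal points `(u - z - 1, v - 1)` and
`(u - 1, v - w - 1)` of `L`.

The three binomials of these relations rewrite every monomial into one with exponent in `L` and
the same `H`-degree; as `H`-degrees are distinct on `L`, they generate `I(H)`. Setting all
variables but `xᵢ` to `0` kills two of them and sends the third to a power of `X`, so every syzygy
among them has coefficients without constant term, and a rank count over `k` gives minimality.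
-/

section NumericalSemigroup

variable {m0 m1 n : ℤ}

lemma inH3_of_nonneg {x a b c : ℤ} (ha : 0 ≤ a) (hb : 0 ≤ b) (hc : 0 ≤ c)
    (hx : x = a * m0 + b * m1 + c * n) : inH3 m0 m1 n x :=
  ⟨a.toNat, b.toNat, c.toNat, by simp [ha, hb, hc, hx]⟩

lemma inSp3_of_nonneg {x a b : ℤ} (ha : 0 ≤ a) (hb : 0 ≤ b)
    (hx : x = a * m0 + b * m1) : inSp3 m0 m1 x :=
  ⟨a.toNat, b.toNat, by simp [ha, hb, hx]⟩

lemma inH3_add {x y : ℤ} (hx : inH3 m0 m1 n x) (hy : inH3 m0 m1 n y) :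
    inH3 m0 m1 n (x + y) := by
  obtain ⟨a, b, c, rfl⟩ := hx
  obtain ⟨a', b', c', rfl⟩ := hy
  exact ⟨a + a', b + b', c + c', by push_cast; ring⟩

lemma inH3_sub_generator {x : ℤ} (hx : inH3 m0 m1 n x) (hx0 : x ≠ 0) :
    inH3 m0 m1 n (x - m0) ∨ inH3 m0 m1 n (x - m1) ∨ inH3 m0 m1 n (x - n) := by
  obtain ⟨a, b, c, rfl⟩ := hx
  rcases Nat.eq_zero_or_pos a with rfl | ha
  · rcases Nat.eq_zero_or_pos b with rfl | hb
    · rcases Nat.eq_zero_or_pos c with rfl | hc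
      · simp at hx0
      · exact Or.inr (Or.inr (inH3_of_nonneg (a := 0) (b := 0) (c := c - 1) le_rfl le_rfl
          (by omega) (by ring)))
    · exact Or.inr (Or.inl (inH3_of_nonneg (a := 0) (b := b - 1) (c := c) le_rfl (by omega)
        (by omega) (by ring)))
  · exact Or.inl (inH3_of_nonneg (a := a - 1) (b := b) (c := c) (by omega) (by omega)
      (by omega) (by ring))

lemma isPF3_iff_add_generators {f : ℤ} (hm0 : m0 ≠ 0) (hm1 : m1 ≠ 0) (hn : n ≠ 0) :
    isPF3 m0 m1 n f ↔ ¬ inH3 m0 m1 n f ∧ inH3 m0 m1 n (f + m0) ∧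
      inH3 m0 m1 n (f + m1) ∧ inH3 m0 m1 n (f + n) := by
  refine ⟨fun ⟨hf, h⟩ => ⟨hf, h m0 ⟨1, 0, 0, by ring⟩ hm0, h m1 ⟨0, 1, 0, by ring⟩ hm1,
    h n ⟨0, 0, 1, by ring⟩ hn⟩, fun ⟨hf, h0, h1, h2⟩ => ⟨hf, fun x hx hx0 => ?_⟩⟩
  rcases inH3_sub_generator hx hx0 with h | h | h
  · simpa using inH3_add h0 h
  · simpa using inH3_add h1 h
  · simpa using inH3_add h2 h

end NumericalSemigroup

/-- The exponents `(b, c)` with `b·m₁ + c·n ∈ Ap(H, m₀)`: the box `[0, u) × [0, v)` minus its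
corner `[u - z, u) × [v - w, v)`. -/
def InLShape (u v z w b c : ℕ) : Prop := b < u ∧ c < v ∧ (b + z < u ∨ c + w < v)

lemma inLShape_maximal_iff {u v z w b c : ℕ} (hz : 0 < z) (hzu : z < u) (hw : 0 < w)
    (hwv : w < v) :
    InLShape u v z w b c ∧ ¬ InLShape u v z w (b + 1) c ∧ ¬ InLShape u v z w b (c + 1) ↔
      (b = u - z - 1 ∧ c = v - 1) ∨ (b = u - 1 ∧ c = v - w - 1) := by
  unfold InLShape
  omega

/-- The invariants `u, v, z, w, λ, μ` of `H = ⟨m₀, m₁, n⟩`, through the minimality of `u`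
(least with `u·m₁ - m₀ ∈ H`) and of `v` (least positive with `v·n ∈ ⟨m₀, m₁⟩`) and the relations
they satisfy. -/
structure CriticalData (m0 m1 n : ℤ) (u v z w lam mu : ℕ) : Prop where
  sub_not_mem : ∀ t : ℤ, 0 ≤ t → t < u → ¬ inH3 m0 m1 n (t * m1 - m0)
  not_mem_span : ∀ s : ℤ, 0 < s → s < v → ¬ inSp3 m0 m1 (s * n)
  rel_u : (u : ℤ) * m1 = lam * m0 + w * n
  rel_v : (v : ℤ) * n = mu * m0 + z * m1

namespace CriticalData

variable {m0 m1 n : ℤ} {u v z w lam mu : ℕ}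

lemma of_lowerBounds
    (hu : u ∈ lowerBounds {t : ℕ | ¬ (inH3 m0 m1 n (t * m1) ∧ ¬ inH3 m0 m1 n (t * m1 - m0))})
    (hv : v ∈ lowerBounds {s : ℕ | 1 ≤ s ∧ inSp3 m0 m1 (s * n)})
    (rel_u : (u : ℤ) * m1 = lam * m0 + w * n) (rel_v : (v : ℤ) * n = mu * m0 + z * m1) :
    CriticalData m0 m1 n u v z w lam mu where
  sub_not_mem t ht htu hmem := by
    lift t to ℕ using ht
    exact absurd (hu fun h => h.2 hmem) (by omega)
  not_mem_span s hs hsv hmem := by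
    lift s to ℕ using hs.le
    exact absurd (hv ⟨by omega, hmem⟩) (by omega)
  rel_u := rel_u
  rel_v := rel_v

lemma no_relation (S : CriticalData m0 m1 n u v z w lam mu) {b c K : ℤ}
    (hb : 0 < b) (hbu : b < u) (hc : 0 < c) (hcv : c < v) (hL : b + z < u ∨ c + w < v) :
    b * m1 + c * n ≠ K * m0 := by
  -- Adding the relation for `v` (resp. `u`) to `h` contradicts the minimality of `v` or `u`.
  intro h
  rcases hL with hL | hL
  · by_cases hK : K ≤ mu
    · exact S.not_mem_span (v - c) (by omega) (by omega)
        (inSp3_of_nonneg (a := mu - K) (b := z + b) (by omega) (by omega)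
          (by linear_combination S.rel_v - h))
    · exact S.sub_not_mem (z + b) (by omega) (by omega)
        (inH3_of_nonneg (a := K - mu - 1) (b := 0) (c := v - c) (by omega) le_rfl (by omega)
          (by linear_combination h - S.rel_v))
  · by_cases hK : K < lam
    · exact S.sub_not_mem (u - b) (by omega) (by omega)
        (inH3_of_nonneg (a := lam - 1 - K) (b := 0) (c := w + c) (by omega) le_rfl (by omega)
          (by linear_combination S.rel_u - h))
    · exact S.not_mem_span (w + c) (by omega) (by omega)
        (inSp3_of_nonneg (a := K - lam) (b := u - b) (by omega) (by omega)
          (by linear_combination h - S.rel_u))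

lemma sub_not_mem_of_inLShape (S : CriticalData m0 m1 n u v z w lam mu)
    (hm0 : 0 < m0) (hm1 : 0 ≤ m1) (hn : 0 ≤ n) {b c : ℕ} (hbc : InLShape u v z w b c) :
    ¬ inH3 m0 m1 n (b * m1 + c * n - m0) := by
  rintro ⟨a', b', c', h⟩
  obtain ⟨hbu, hcv, hL⟩ := hbc
  rcases lt_or_ge b' b with hb | hb <;> rcases lt_or_ge c' c with hc | hc
  · exact S.no_relation (b := b - b') (c := c - c') (K := a' + 1) (by omega) (by omega)
      (by omega) (by omega) (by omega) (by linear_combination h)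
  · exact S.sub_not_mem (b - b') (by omega) (by omega)
      (inH3_of_nonneg (a := a') (b := 0) (c := c' - c) (by omega) le_rfl (by omega)
        (by linear_combination h))
  · exact S.not_mem_span (c - c') (by omega) (by omega)
      (inSp3_of_nonneg (a := a' + 1) (b := b' - b) (by omega) (by omega)
        (by linear_combination h))
  · have : (b : ℤ) * m1 + c * n ≤ b' * m1 + c' * n := by gcongr
    nlinarith

lemma eq_of_mul_add_mul_eq (S : CriticalData m0 m1 n u v z w lam mu) (hm1 : 0 < m1) (hn : 0 < n)
    {b c b' c' : ℕ} (hc : c < v) (hc' : c' < v) (h : b * m1 + c * n = b' * m1 + c' * n) :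
    b = b' ∧ c = c' := by
  wlog hcc : c ≤ c' generalizing b c b' c'
  · exact (this hc' hc h.symm (by omega)).imp Eq.symm Eq.symm
  rcases hcc.lt_or_eq with hcc | rfl
  · have hbb : (b' : ℤ) < b := by
      by_contra! hbb
      nlinarith
    exact (S.not_mem_span (c' - c) (by omega) (by omega)
      (inSp3_of_nonneg (a := 0) (b := b - b') le_rfl (by omega)
        (by linear_combination -h))).elim
  · exact ⟨by exact_mod_cast mul_right_cancel₀ hm1.ne' (by linarith : (b : ℤ) * m1 = b' * m1),
      rfl⟩

lemma eq_of_inLShape_of_eq (S : CriticalData m0 m1 n u v z w lam mu)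
    (hm0 : 0 < m0) (hm1 : 0 < m1) (hn : 0 < n) {a b c a' b' c' : ℕ}
    (hbc : InLShape u v z w b c) (hbc' : InLShape u v z w b' c')
    (h : a * m0 + b * m1 + c * n = a' * m0 + b' * m1 + c' * n) :
    a = a' ∧ b = b' ∧ c = c' := by
  wlog haa : a ≤ a' generalizing a b c a' b' c'
  · obtain ⟨h1, h2, h3⟩ := this hbc' hbc h.symm (by omega)
    exact ⟨h1.symm, h2.symm, h3.symm⟩
  obtain rfl : a = a' := by
    by_contra hne
    exact S.sub_not_mem_of_inLShape hm0 hm1.le hn.le hbc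
      (inH3_of_nonneg (a := a' - a - 1) (b := b') (c := c') (by omega) (by omega) (by omega)
        (by linear_combination h))
  exact ⟨rfl, S.eq_of_mul_add_mul_eq hm1 hn hbc.2.1 hbc'.2.1 (by linarith)⟩

lemma sub_mem_of_not_inLShape (S : CriticalData m0 m1 n u v z w lam mu)
    (hlam : 0 < lam) (hmu : 0 < mu) {b c : ℕ} (hbc : ¬ InLShape u v z w b c) :
    inH3 m0 m1 n (b * m1 + c * n - m0) := by
  unfold InLShape at hbc
  by_cases hb : u ≤ b
  · exact inH3_of_nonneg (a := lam - 1) (b := b - u) (c := c + w) (by omega) (by omega)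
      (by omega) (by linear_combination S.rel_u)
  by_cases hc : v ≤ c
  · exact inH3_of_nonneg (a := mu - 1) (b := b + z) (c := c - v) (by omega) (by omega)
      (by omega) (by linear_combination S.rel_v)
  · exact inH3_of_nonneg (a := lam + mu - 1) (b := b + z - u) (c := c + w - v) (by omega)
      (by omega) (by omega) (by linear_combination S.rel_u + S.rel_v)

lemma sub_not_mem_iff (S : CriticalData m0 m1 n u v z w lam mu)
    (hm0 : 0 < m0) (hm1 : 0 ≤ m1) (hn : 0 ≤ n) (hlam : 0 < lam) (hmu : 0 < mu) {b c : ℕ} :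
    ¬ inH3 m0 m1 n (b * m1 + c * n - m0) ↔ InLShape u v z w b c :=
  ⟨fun h => by_contra fun hbc => h (S.sub_mem_of_not_inLShape hlam hmu hbc),
    S.sub_not_mem_of_inLShape hm0 hm1 hn⟩

lemma isPF3_iff_exists_maximal (S : CriticalData m0 m1 n u v z w lam mu)
    (hm0 : 0 < m0) (hm1 : 0 < m1) (hn : 0 < n) (hlam : 0 < lam) (hmu : 0 < mu) {f : ℤ} :
    isPF3 m0 m1 n f ↔ ∃ b c : ℕ, f = b * m1 + c * n - m0 ∧ InLShape u v z w b c ∧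
      ¬ InLShape u v z w (b + 1) c ∧ ¬ InLShape u v z w b (c + 1) := by
  have key := fun b c => S.sub_not_mem_iff hm0 hm1.le hn.le hlam hmu (b := b) (c := c)
  rw [isPF3_iff_add_generators hm0.ne' hm1.ne' hn.ne']
  constructor
  · rintro ⟨hf, ⟨a, b, c, h0⟩, h1, h2⟩
    obtain rfl : a = 0 := by
      by_contra ha
      exact hf (inH3_of_nonneg (a := a - 1) (b := b) (c := c) (by omega) (by omega) (by omega)
        (by linear_combination h0))
    have hf' : f = b * m1 + c * n - m0 := by linear_combination h0
    subst hf'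
    refine ⟨b, c, rfl, (key b c).1 hf, fun h => (key (b + 1) c).2 h ?_,
      fun h => (key b (c + 1)).2 h ?_⟩
    · convert h1 using 1; push_cast; ring
    · convert h2 using 1; push_cast; ring
  · rintro ⟨b, c, rfl, hbc, hb, hc⟩
    refine ⟨(key b c).2 hbc, ⟨0, b, c, by ring⟩, ?_, ?_⟩
    · convert S.sub_mem_of_not_inLShape hlam hmu hb using 1; push_cast; ring
    · convert S.sub_mem_of_not_inLShape hlam hmu hc using 1; push_cast; ring

lemma isPF3_iff_eq_or_eq (S : CriticalData m0 m1 n u v z w lam mu)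
    (hm0 : 0 < m0) (hm1 : 0 < m1) (hn : 0 < n) (hz : 0 < z) (hzu : z < u) (hw : 0 < w)
    (hwv : w < v) (hlam : 0 < lam) (hmu : 0 < mu) {f : ℤ} :
    isPF3 m0 m1 n f ↔ f = ((u - z - 1 : ℕ) : ℤ) * m1 + ((v - 1 : ℕ) : ℤ) * n - m0 ∨
      f = ((u - 1 : ℕ) : ℤ) * m1 + ((v - w - 1 : ℕ) : ℤ) * n - m0 := by
  rw [S.isPF3_iff_exists_maximal hm0 hm1 hn hlam hmu]
  simp only [inLShape_maximal_iff hz hzu hw hwv]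
  constructor
  · rintro ⟨b, c, rfl, ⟨rfl, rfl⟩ | ⟨rfl, rfl⟩⟩
    exacts [Or.inl rfl, Or.inr rfl]
  · rintro (rfl | rfl)
    exacts [⟨_, _, rfl, Or.inl ⟨rfl, rfl⟩⟩, ⟨_, _, rfl, Or.inr ⟨rfl, rfl⟩⟩]

lemma pseudoFrobenius_ne (S : CriticalData m0 m1 n u v z w lam mu) (hzu : z < u) (hw : 0 < w)
    (hwv : w < v) :
    ((u - z - 1 : ℕ) : ℤ) * m1 + ((v - 1 : ℕ) : ℤ) * n - m0 ≠
      ((u - 1 : ℕ) : ℤ) * m1 + ((v - w - 1 : ℕ) : ℤ) * n - m0 := by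
  intro h
  refine S.not_mem_span w (by omega) (by omega)
    (inSp3_of_nonneg (a := 0) (b := z) le_rfl (by omega) ?_)
  rw [show ((u - z - 1 : ℕ) : ℤ) = u - z - 1 by omega, show ((u - 1 : ℕ) : ℤ) = u - 1 by omega,
    show ((v - 1 : ℕ) : ℤ) = v - 1 by omega, show ((v - w - 1 : ℕ) : ℤ) = v - w - 1 by omega] at h
  linear_combination h

lemma rel_corner (S : CriticalData m0 m1 n u v z w lam mu) (hzu : z ≤ u) (hwv : w ≤ v) :
    ((u - z : ℕ) : ℤ) * m1 + ((v - w : ℕ) : ℤ) * n = (lam + mu : ℕ) * m0 := by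
  push_cast [hzu, hwv]
  linear_combination S.rel_u + S.rel_v

end CriticalData

section WeightedKernel

variable {σ R : Type*} [CommRing R] (w : σ → ℕ)

lemma aeval_X_pow_monomial (e : σ →₀ ℕ) (r : R) :
    aeval (fun i => (Polynomial.X : Polynomial R) ^ w i) (monomial e r) =
      Polynomial.C r * Polynomial.X ^ Finsupp.weight w e := by
  simp only [aeval_monomial, Finsupp.prod, Finsupp.weight_apply, Finsupp.sum, ← pow_mul,
    Finset.prod_pow_eq_pow_sum, smul_eq_mul, mul_comm, Polynomial.algebraMap_eq]

lemma eq_zero_of_aeval_X_pow_eq_zero {S : Set (σ →₀ ℕ)} (hS : S.InjOn (Finsupp.weight w))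
    {g : MvPolynomial σ R} (hg : ↑g.support ⊆ S)
    (h0 : aeval (fun i => (Polynomial.X : Polynomial R) ^ w i) g = 0) : g = 0 := by
  ext e
  by_cases he : e ∈ g.support
  · have hcoeff : (aeval (fun i => (Polynomial.X : Polynomial R) ^ w i) g).coeff
        (Finsupp.weight w e) = coeff e g := by
      conv_lhs => rw [g.as_sum]
      rw [map_sum, Polynomial.finsetSum_coeff, Finset.sum_eq_single_of_mem e he]
      · simp [aeval_X_pow_monomial]
      · intro e' he' hne
        rw [aeval_X_pow_monomial, Polynomial.coeff_C_mul_X_pow,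
          if_neg fun h => hne (hS (hg he') (hg he) h.symm)]
    simp [← hcoeff, h0]
  · simpa using he

lemma ker_aeval_X_pow_le {J : Ideal (MvPolynomial σ R)} {S : Set (σ →₀ ℕ)}
    (hS : S.InjOn (Finsupp.weight w))
    (hred : ∀ e, ∃ e' ∈ S, Finsupp.weight w e' = Finsupp.weight w e ∧
      monomial e (1 : R) - monomial e' 1 ∈ J) :
    RingHom.ker (aeval (fun i => (Polynomial.X : Polynomial R) ^ w i)).toRingHom ≤ J := by
  -- Replacing each monomial of `f` by a normal form of the same weight gives `F ≡ f` mod `J`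
  -- with the same image; `F` is supported on `S`, where the evaluation is injective.
  classical
  intro f hf
  choose nf hnfS hnfw hnfJ using hred
  set F := ∑ e ∈ f.support, monomial (nf e) (coeff e f)
  have hfF : f - F = ∑ e ∈ f.support, C (coeff e f) * (monomial e 1 - monomial (nf e) 1) := by
    simp only [F, mul_sub, C_mul_monomial, mul_one, Finset.sum_sub_distrib, ← f.as_sum]
  have hF : F = 0 := by
    refine eq_zero_of_aeval_X_pow_eq_zero w hS (fun e he => ?_) ?_
    · obtain ⟨e₀, -, he₀⟩ := Finset.mem_biUnion.1 (support_sum he)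
      rw [Finset.mem_singleton.1 (support_monomial_subset he₀)]
      exact hnfS e₀
    · have h := congrArg (aeval (fun i => (Polynomial.X : Polynomial R) ^ w i)) hfF
      simp only [map_sub, map_sum, map_mul, aeval_X_pow_monomial, hnfw, sub_self,
        mul_zero, Finset.sum_const_zero] at h
      have hf' : aeval (fun i => (Polynomial.X : Polynomial R) ^ w i) f = 0 := hf
      simpa [hf'] using h
  have hmem := J.sum_mem fun e (_ : e ∈ f.support) => J.mul_mem_left (C (coeff e f)) (hnfJ e)
  simpa [← hfF, hF] using hmem

lemma exists_normal_of_step {J : Ideal (MvPolynomial σ R)} {S : Set (σ →₀ ℕ)}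
    (μ : (σ →₀ ℕ) → ℕ)
    (hstep : ∀ e ∉ S, ∃ e', μ e' < μ e ∧ Finsupp.weight w e' = Finsupp.weight w e ∧
      monomial e (1 : R) - monomial e' 1 ∈ J) (e : σ →₀ ℕ) :
    ∃ e' ∈ S, Finsupp.weight w e' = Finsupp.weight w e ∧ monomial e (1 : R) - monomial e' 1 ∈ J := by
  induction e using (measure μ).wf.induction with
  | _ e ih =>
  by_cases he : e ∈ S
  · exact ⟨e, he, rfl, by simp⟩
  obtain ⟨e₁, hμ, hw₁, hJ₁⟩ := hstep e he
  obtain ⟨e', he', hw', hJ'⟩ := ih e₁ hμ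
  exact ⟨e', he', hw'.trans hw₁, by simpa using J.add_mem hJ₁ hJ'⟩

lemma exists_step_of_binomial {J : Ideal (MvPolynomial σ R)} (μ : σ → ℕ) {a b e : σ →₀ ℕ}
    (hJ : monomial a (1 : R) - monomial b 1 ∈ J)
    (hw : Finsupp.weight w a = Finsupp.weight w b)
    (hμ : Finsupp.weight μ b < Finsupp.weight μ a) (hae : a ≤ e) :
    ∃ e', Finsupp.weight μ e' < Finsupp.weight μ e ∧
      Finsupp.weight w e' = Finsupp.weight w e ∧ monomial e (1 : R) - monomial e' 1 ∈ J := by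
  refine ⟨e - a + b, ?_, ?_, ?_⟩ <;> conv_rhs => rw [← tsub_add_cancel_of_le hae]
  · simpa using hμ
  · simp [hw]
  · simpa [mul_sub, monomial_mul] using J.mul_mem_left (monomial (e - a) 1) hJ

end WeightedKernel

lemma coeff_zero_aeval_eq_constantCoeff {σ R : Type*} [CommRing R] {f : σ → Polynomial R}
    (hf : ∀ i, (f i).coeff 0 = 0) (p : MvPolynomial σ R) :
    (aeval f p).coeff 0 = constantCoeff p := by
  have : Polynomial.constantCoeff.comp (aeval f).toRingHom = constantCoeff :=
    ringHom_ext (by simp) (by simp [hf])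
  exact RingHom.congr_fun this p

open Matrix in
lemma Ideal.le_card_of_span_eq {R K : Type*} [CommRing R] [Field K] (φ : R →+* K) {m : ℕ}
    (g : Fin m → R) (hg : ∀ h : Fin m → R, ∑ j, h j * g j = 0 → ∀ j, φ (h j) = 0)
    (T : Finset R) (hT : Ideal.span (T : Set R) = Ideal.span (Set.range g)) : m ≤ T.card := by
  -- With `g = A t` and `t = B g`, `hg` gives `φ(A) φ(B) = 1`, so `m ≤ rank φ(B) ≤ |T|`.
  have hA : ∀ i, ∃ a : T → R, ∑ t : T, a t • t.1 = g i := fun i =>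
    Submodule.mem_span_finset'.1 (hT ▸ Ideal.subset_span (Set.mem_range_self i) :)
  have hB : ∀ t : T, ∃ b : Fin m → R, ∑ j, b j * g j = t := fun t =>
    Ideal.mem_span_range_iff_exists_fun.1 (hT ▸ Ideal.subset_span t.2)
  choose A hA using hA
  choose B hB using hB
  have hAB : (of A * of B - 1) *ᵥ g = 0 := by
    have hg' : of A *ᵥ (of B *ᵥ g) = g := by
      ext i; simp [mulVec, dotProduct, hB, ← hA i, smul_eq_mul]
    rw [sub_mulVec, ← mulVec_mulVec, hg', one_mulVec, sub_self]
  have hMN : (of A).map φ * (of B).map φ = 1 := by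
    rw [← Matrix.map_mul]
    ext i j
    have := hg _ (congrFun hAB i) j
    rw [Matrix.sub_apply, map_sub, sub_eq_zero] at this
    rw [map_apply, this, one_apply, one_apply]
    split_ifs <;> simp
  calc m = (1 : Matrix (Fin m) (Fin m) K).rank := by simp [rank_one]
    _ ≤ _ := hMN ▸ rank_mul_le_right _ _
    _ ≤ Fintype.card T := rank_le_card_height _
    _ = T.card := Fintype.card_coe T

/-- The `i`-th binomial is the one whose pure power is in `xᵢ`; `λ + μ` is the paper's `ν`. -/
noncomputable def criticalBinomial (R : Type*) [CommRing R] (u v z w lam mu : ℕ) :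
    Fin 3 → MvPolynomial (Fin 3) R :=
  ![X 0 ^ (lam + mu) - X 1 ^ (u - z) * X 2 ^ (v - w), X 1 ^ u - X 0 ^ lam * X 2 ^ w,
    X 2 ^ v - X 0 ^ mu * X 1 ^ z]

section ThreeGenerated

variable {R : Type*} [CommRing R] {m0 m1 n u v z w lam mu : ℕ}

lemma range_criticalBinomial :
    Set.range (criticalBinomial R u v z w lam mu) =
      {X 0 ^ (lam + mu) - X 1 ^ (u - z) * X 2 ^ (v - w), X 1 ^ u - X 0 ^ lam * X 2 ^ w,
        X 2 ^ v - X 0 ^ mu * X 1 ^ z} := by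
  rw [criticalBinomial, Matrix.range_cons, Matrix.range_cons, Matrix.range_cons_empty,
    Set.singleton_union, Set.singleton_union]

lemma CriticalData.rels_nat (S : CriticalData m0 m1 n u v z w lam mu) (hzu : z ≤ u)
    (hwv : w ≤ v) :
    u * m1 = lam * m0 + w * n ∧ v * n = mu * m0 + z * m1 ∧
      (u - z) * m1 + (v - w) * n = (lam + mu) * m0 :=
  ⟨by exact_mod_cast S.rel_u, by exact_mod_cast S.rel_v, by exact_mod_cast S.rel_corner hzu hwv⟩

lemma weight_injOn_inLShape (S : CriticalData m0 m1 n u v z w lam mu)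
    (hm0 : 0 < m0) (hm1 : 0 < m1) (hn : 0 < n) :
    {e : Fin 3 →₀ ℕ | InLShape u v z w (e 1) (e 2)}.InjOn (Finsupp.weight ![m0, m1, n]) := by
  intro e he e' he' h
  have h' : ((e 0 : ℕ) : ℤ) * m0 + (e 1 : ℕ) * m1 + (e 2 : ℕ) * n =
      (e' 0 : ℕ) * m0 + (e' 1 : ℕ) * m1 + (e' 2 : ℕ) * n := by
    simp only [Finsupp.weight_eq_sum, Fin.sum_univ_three, smul_eq_mul] at h
    exact_mod_cast h
  obtain ⟨h0, h1, h2⟩ := S.eq_of_inLShape_of_eq (by exact_mod_cast hm0) (by exact_mod_cast hm1)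
    (by exact_mod_cast hn) he he' h'
  ext i
  fin_cases i <;> assumption

lemma exists_step_criticalBinomial (S : CriticalData m0 m1 n u v z w lam mu)
    (hm0 : 0 < m0) (hm1 : 0 < m1) (hlam : 0 < lam) (hmu : 0 < mu) (hzu : z < u) (hwv : w < v)
    (e : Fin 3 →₀ ℕ) (he : ¬ InLShape u v z w (e 1) (e 2)) :
    ∃ e', Finsupp.weight ![0, m1, n] e' < Finsupp.weight ![0, m1, n] e ∧
      Finsupp.weight ![m0, m1, n] e' = Finsupp.weight ![m0, m1, n] e ∧
      monomial e (1 : R) - monomial e' 1 ∈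
        Ideal.span (Set.range (criticalBinomial R u v z w lam mu)) := by
  have hJ : ∀ i, criticalBinomial R u v z w lam mu i ∈
      Ideal.span (Set.range (criticalBinomial R u v z w lam mu)) :=
    fun i => Ideal.subset_span ⟨i, rfl⟩
  obtain ⟨rel_u, rel_v, rel_uv⟩ := S.rels_nat hzu.le hwv.le
  have hlm := Nat.mul_pos hlam hm0
  have hmm := Nat.mul_pos hmu hm0
  unfold InLShape at he
  rcases (by omega : (u - z ≤ e 1 ∧ v - w ≤ e 2) ∨ u ≤ e 1 ∨ v ≤ e 2) with ⟨h1, h2⟩ | h | h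
  · refine exists_step_of_binomial _ _ (a := Finsupp.single 1 (u - z) + Finsupp.single 2 (v - w))
      (b := Finsupp.single 0 (lam + mu)) ?_ ?_ ?_ ?_
    · simpa [criticalBinomial, X_pow_eq_monomial, monomial_mul] using neg_mem (hJ 0)
    · simpa [Finsupp.weight_single, -Finsupp.single_tsub, mul_comm, mul_add] using rel_uv
    · simp [Finsupp.weight_single, -Finsupp.single_tsub]; omega
    · intro i; fin_cases i <;> simp [h1, h2]
  · refine exists_step_of_binomial _ _ (a := Finsupp.single 1 u)
      (b := Finsupp.single 0 lam + Finsupp.single 2 w) ?_ ?_ ?_ (Finsupp.single_le_iff.2 h)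
    · simpa [criticalBinomial, X_pow_eq_monomial, monomial_mul] using hJ 1
    · simpa [Finsupp.weight_single, -Finsupp.single_tsub, mul_comm] using rel_u
    · simp [Finsupp.weight_single, -Finsupp.single_tsub]; nlinarith
  · refine exists_step_of_binomial _ _ (a := Finsupp.single 2 v)
      (b := Finsupp.single 0 mu + Finsupp.single 1 z) ?_ ?_ ?_ (Finsupp.single_le_iff.2 h)
    · simpa [criticalBinomial, X_pow_eq_monomial, monomial_mul] using hJ 2
    · simpa [Finsupp.weight_single, -Finsupp.single_tsub, mul_comm] using rel_v
    · simp [Finsupp.weight_single, -Finsupp.single_tsub]; nlinarith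

lemma ker_aeval_eq_span_criticalBinomial (S : CriticalData m0 m1 n u v z w lam mu)
    (hm0 : 0 < m0) (hm1 : 0 < m1) (hn : 0 < n) (hlam : 0 < lam) (hmu : 0 < mu) (hzu : z < u)
    (hwv : w < v) :
    RingHom.ker (aeval fun i => (Polynomial.X : Polynomial R) ^ (![m0, m1, n] i)).toRingHom =
      Ideal.span (Set.range (criticalBinomial R u v z w lam mu)) := by
  refine le_antisymm (ker_aeval_X_pow_le _ (weight_injOn_inLShape S hm0 hm1 hn)
    (exists_normal_of_step _ (Finsupp.weight ![0, m1, n])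
      (exists_step_criticalBinomial S hm0 hm1 hlam hmu hzu hwv))) ?_
  obtain ⟨rel_u, rel_v, rel_uv⟩ := S.rels_nat hzu.le hwv.le
  rw [Ideal.span_le, Set.range_subset_iff]
  intro i
  fin_cases i <;> simp [criticalBinomial, ← pow_mul, ← pow_add, sub_eq_zero] <;>
    congr 1 <;> linarith

lemma constantCoeff_eq_zero_of_sum_mul_criticalBinomial [IsDomain R] (hz : 0 < z) (hzu : z < u)
    (hw : 0 < w) (hwv : w < v) (hlam : 0 < lam) (hmu : 0 < mu) (h : Fin 3 → MvPolynomial (Fin 3) R)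
    (hsum : ∑ j, h j * criticalBinomial R u v z w lam mu j = 0) (j : Fin 3) :
    constantCoeff (h j) = 0 := by
  -- Setting every variable but `xⱼ` to `0` kills all binomials but the `j`-th, a power of `X`.
  have hsum' := congrArg (aeval (Pi.single j (Polynomial.X : Polynomial R))) hsum
  rw [← coeff_zero_aeval_eq_constantCoeff (f := Pi.single j Polynomial.X)
    (fun i => by by_cases hi : i = j <;> simp [hi])]
  obtain ⟨hu, hv, huz, hvw⟩ : u ≠ 0 ∧ v ≠ 0 ∧ u - z ≠ 0 ∧ v - w ≠ 0 := by omega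
  fin_cases j <;> simp [Fin.sum_univ_three, criticalBinomial, hu, hv, huz, hvw, hz.ne', hw.ne',
    hlam.ne', hmu.ne'] at hsum' <;> simp [hsum']

end ThreeGenerated

lemma rfBinom3_criticalMatrix {k : Type*} [Field k] {u v z w lam mu : ℕ} (hzu : z ≤ u)
    (hwv : w ≤ v) :
    let A : Fin 3 → Fin 3 → ℤ :=
      ![![-1, (u : ℤ) - 1, (v : ℤ) - w - 1], ![(lam : ℤ) - 1, -1, (v : ℤ) - 1],
        ![((lam + mu : ℕ) : ℤ) - 1, (z : ℤ) - 1, -1]]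
    rfBinom3 k A 0 1 = X 0 ^ lam * X 2 ^ w - X 1 ^ u ∧
      rfBinom3 k A 0 2 = X 0 ^ (lam + mu) - X 1 ^ (u - z) * X 2 ^ (v - w) ∧
      rfBinom3 k A 1 2 = X 0 ^ mu * X 1 ^ z - X 2 ^ v := by
  simp (disch := omega) [rfBinom3, Fin.prod_univ_three, Int.toNat_of_nonpos,
    show ((lam : ℤ) + mu).toNat = lam + mu by omega]

theorem stmt_16_general (k : Type*) [Field k] (m0 d n : ℕ)
    (hm0 : 0 < m0) (hn : 0 < n)
    (u v z w lam mu nu : ℕ)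
    -- u = min { t | g_t ∉ Ap(H, m0) }, where g_t = t·m1 for p = 1
    (hu : IsLeast {t : ℕ |
      ¬ (inH3 m0 (m0 + d) n ((t : ℤ) * ((m0 : ℤ) + d)) ∧
         ¬ inH3 m0 (m0 + d) n ((t : ℤ) * ((m0 : ℤ) + d) - m0))} u)
    -- v = min { b ≥ 1 | b·n ∈ H' }
    (hv : IsLeast {b : ℕ | 1 ≤ b ∧ inSp3 m0 (m0 + d) ((b : ℤ) * n)} v)
    (hzu : z < u) (hwv : w < v) (hlam : 1 ≤ lam)
    (hgu : (u : ℤ) * ((m0 : ℤ) + d) = lam * m0 + w * n)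
    (hvn : (v : ℤ) * n = mu * m0 + (z : ℤ) * ((m0 : ℤ) + d))
    (hnu : ((u - z : ℕ) : ℤ) * ((m0 : ℤ) + d) + ((v - w : ℕ) : ℤ) * n
            = nu * m0)
    (hW : 1 ≤ z ∧ 1 ≤ w)                                 -- W ≠ ∅
    (hmupos : 0 < mu) :                                  -- μ > 0
    -- PF(H) = {α_1, β_1}, two distinct elements: H is not symmetric
    (∀ f : ℤ, isPF3 m0 (m0 + d) n f ↔
        (f = ((u - z - 1 : ℕ) : ℤ) * ((m0 : ℤ) + d) + ((v : ℤ) - 1) * n - m0 ∨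
         f = ((u - 1 : ℕ) : ℤ) * ((m0 : ℤ) + d) + ((v - w - 1 : ℕ) : ℤ) * n - m0)) ∧
    (((u - z - 1 : ℕ) : ℤ) * ((m0 : ℤ) + d) + ((v : ℤ) - 1) * n - m0 ≠
      ((u - 1 : ℕ) : ℤ) * ((m0 : ℤ) + d) + ((v - w - 1 : ℕ) : ℤ) * n - m0) ∧
    -- I(H) is the stated ideal (q = u − 1, q' = u − z − 1, q − q' = z)
    RingHom.ker (MvPolynomial.aeval (R := k)
        (fun i : Fin 3 => (Polynomial.X : Polynomial k) ^ (![m0, m0 + d, n] i))).toRingHom =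
      Ideal.span {X 0 ^ nu - X 1 ^ ((u - z - 1) + 1) * X 2 ^ (v - w),
                  X 1 ^ ((u - 1) + 1) - X 0 ^ lam * X 2 ^ w,
                  X 2 ^ v - X 0 ^ mu * X 1 ^ ((u - 1) - (u - z - 1))} ∧
    -- I(H) is generated by the three RF(β_1)-relations
    RingHom.ker (MvPolynomial.aeval (R := k)
        (fun i : Fin 3 => (Polynomial.X : Polynomial k) ^ (![m0, m0 + d, n] i))).toRingHom =
      Ideal.span {X 1 ^ u - X 0 ^ lam * X 2 ^ w,
                  X 0 ^ nu - X 1 ^ (u - z) * X 2 ^ (v - w),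
                  X 2 ^ v - X 0 ^ mu * X 1 ^ z} ∧
    -- these three binomials are (up to sign) RF(β_1)-relations of the matrix
    (∀ f ∈ ({X 1 ^ u - X 0 ^ lam * X 2 ^ w,
             X 0 ^ nu - X 1 ^ (u - z) * X 2 ^ (v - w),
             X 2 ^ v - X 0 ^ mu * X 1 ^ z} : Set (MvPolynomial (Fin 3) k)),
      ∃ i j : Fin 3,
        f = rfBinom3 k
          ![![-1, (u : ℤ) - 1, (v : ℤ) - w - 1],
            ![(lam : ℤ) - 1, -1, (v : ℤ) - 1],
            ![(nu : ℤ) - 1, (z : ℤ) - 1, -1]] i j ∨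
        f = - rfBinom3 k
          ![![-1, (u : ℤ) - 1, (v : ℤ) - w - 1],
            ![(lam : ℤ) - 1, -1, (v : ℤ) - 1],
            ![(nu : ℤ) - 1, (z : ℤ) - 1, -1]] i j) ∧
    -- minimality: no generating set with fewer than 3 elements
    (∀ T : Finset (MvPolynomial (Fin 3) k),
      Ideal.span (T : Set (MvPolynomial (Fin 3) k)) =
        RingHom.ker (MvPolynomial.aeval (R := k)
          (fun i : Fin 3 => (Polynomial.X : Polynomial k) ^ (![m0, m0 + d, n] i))).toRingHom → 3 ≤ T.card) := by
  obtain ⟨hz, hw⟩ := hW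
  have S : CriticalData m0 ((m0 : ℤ) + d) n u v z w lam mu :=
    .of_lowerBounds hu.2 hv.2 hgu hvn
  obtain rfl : nu = lam + mu := by
    have h := hnu.symm.trans (S.rel_corner hzu.le hwv.le)
    exact_mod_cast mul_right_cancel₀ (by positivity) h
  have hker := ker_aeval_eq_span_criticalBinomial (R := k) (m1 := m0 + d)
    (by push_cast; exact S) hm0 (by omega) hn hlam hmupos hzu hwv
  obtain ⟨h01, h02, h12⟩ := rfBinom3_criticalMatrix (k := k) (lam := lam) (mu := mu) hzu.le hwv.le
  have hv1 : (v : ℤ) - 1 = ((v - 1 : ℕ) : ℤ) := by omega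
  refine ⟨fun f => hv1 ▸ S.isPF3_iff_eq_or_eq (by positivity) (by positivity) (by positivity) hz
    hzu hw hwv hlam hmupos, hv1 ▸ S.pseudoFrobenius_ne hzu hw hwv, ?_, ?_, ?_, fun T hT => ?_⟩
  · rw [hker, range_criticalBinomial, show u - z - 1 + 1 = u - z by omega,
      show u - 1 + 1 = u by omega, show u - 1 - (u - z - 1) = z by omega]
  · rw [hker, range_criticalBinomial, Set.insert_comm]
  · rintro f (rfl | rfl | rfl)
    exacts [⟨0, 1, Or.inr (by rw [h01, neg_sub])⟩, ⟨0, 2, Or.inl h02.symm⟩,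
      ⟨1, 2, Or.inr (by rw [h12, neg_sub])⟩]
  · exact Ideal.le_card_of_span_eq constantCoeff _
      (constantCoeff_eq_zero_of_sum_mul_criticalBinomial hz hzu hw hwv hlam hmupos) T
      (hT.trans hker)

/-- for `p = 1`, `μ > 0`, `W ≠ ∅`: `H = ⟨m0,m1,n⟩` has exactly
the two pseudo-Frobenius numbers `α_1 = (u−z−1)m_1+(v−1)n−m_0` and
`β_1 = (u−1)m_1+(v−w−1)n−m_0` (so `H` is not symmetric); the defining ideal is
`I(H) = ⟨x_0^ν − x_1^{q'+1}x_2^{v−w}, x_1^{q+1} − x_0^λ x_2^w, x_2^v − x_0^μ x_1^{q−q'}⟩`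
and it is minimally generated by the three `RF(β_1)`-relations, which are (up to
sign) the binomials `x_1^u − x_0^λ x_2^w`, `x_0^ν − x_1^{u−z}x_2^{v−w}`,
`x_2^v − x_0^μ x_1^z` coming from the matrix with rows `(−1,u−1,v−w−1)`,
`(λ−1,−1,v−1)`, `(ν−1,z−1,−1)`. -/
theorem stmt_16 (k : Type*) [Field k] (m0 d n : ℕ)
    (hm0 : 0 < m0) (hd : 0 < d) (hn : 0 < n)
    (hgcd : Nat.gcd (Nat.gcd m0 d) n = 1)
    -- minimal generation of H by m0, m1 = m0 + d, n
    (hmin0 : ¬ ∃ b c : ℕ, (m0 : ℤ) = b * ((m0 : ℤ) + d) + c * n)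
    (hmin1 : ¬ ∃ a c : ℕ, ((m0 : ℤ) + d) = a * m0 + c * n)
    (hmin2 : ¬ ∃ a b : ℕ, (n : ℤ) = a * m0 + b * ((m0 : ℤ) + d))
    (u v z w lam mu nu : ℕ)
    -- u = min { t | g_t ∉ Ap(H, m0) }, where g_t = t·m1 for p = 1
    (hu : IsLeast {t : ℕ |
      ¬ (inH3 m0 (m0 + d) n ((t : ℤ) * ((m0 : ℤ) + d)) ∧
         ¬ inH3 m0 (m0 + d) n ((t : ℤ) * ((m0 : ℤ) + d) - m0))} u)
    -- v = min { b ≥ 1 | b·n ∈ H' }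
    (hv : IsLeast {b : ℕ | 1 ≤ b ∧ inSp3 m0 (m0 + d) ((b : ℤ) * n)} v)
    (hzu : z < u) (hwv : w < v) (hlam : 1 ≤ lam)
    (hgu : (u : ℤ) * ((m0 : ℤ) + d) = lam * m0 + w * n)
    (hvn : (v : ℤ) * n = mu * m0 + (z : ℤ) * ((m0 : ℤ) + d))
    (hnu : ((u - z : ℕ) : ℤ) * ((m0 : ℤ) + d) + ((v - w : ℕ) : ℤ) * n
            = nu * m0)
    (hW : 1 ≤ z ∧ 1 ≤ w)                                 -- W ≠ ∅
    (hmupos : 0 < mu) :                                  -- μ > 0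
    -- PF(H) = {α_1, β_1}, two distinct elements: H is not symmetric
    (∀ f : ℤ, isPF3 m0 (m0 + d) n f ↔
        (f = ((u - z - 1 : ℕ) : ℤ) * ((m0 : ℤ) + d) + ((v : ℤ) - 1) * n - m0 ∨
         f = ((u - 1 : ℕ) : ℤ) * ((m0 : ℤ) + d) + ((v - w - 1 : ℕ) : ℤ) * n - m0)) ∧
    (((u - z - 1 : ℕ) : ℤ) * ((m0 : ℤ) + d) + ((v : ℤ) - 1) * n - m0 ≠
      ((u - 1 : ℕ) : ℤ) * ((m0 : ℤ) + d) + ((v - w - 1 : ℕ) : ℤ) * n - m0) ∧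
    -- I(H) is the stated ideal (q = u − 1, q' = u − z − 1, q − q' = z)
    RingHom.ker (MvPolynomial.aeval (R := k)
        (fun i : Fin 3 => (Polynomial.X : Polynomial k) ^ (![m0, m0 + d, n] i))).toRingHom =
      Ideal.span {X 0 ^ nu - X 1 ^ ((u - z - 1) + 1) * X 2 ^ (v - w),
                  X 1 ^ ((u - 1) + 1) - X 0 ^ lam * X 2 ^ w,
                  X 2 ^ v - X 0 ^ mu * X 1 ^ ((u - 1) - (u - z - 1))} ∧
    -- I(H) is generated by the three RF(β_1)-relations
    RingHom.ker (MvPolynomial.aeval (R := k)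
        (fun i : Fin 3 => (Polynomial.X : Polynomial k) ^ (![m0, m0 + d, n] i))).toRingHom =
      Ideal.span {X 1 ^ u - X 0 ^ lam * X 2 ^ w,
                  X 0 ^ nu - X 1 ^ (u - z) * X 2 ^ (v - w),
                  X 2 ^ v - X 0 ^ mu * X 1 ^ z} ∧
    -- these three binomials are (up to sign) RF(β_1)-relations of the matrix
    (∀ f ∈ ({X 1 ^ u - X 0 ^ lam * X 2 ^ w,
             X 0 ^ nu - X 1 ^ (u - z) * X 2 ^ (v - w),
             X 2 ^ v - X 0 ^ mu * X 1 ^ z} : Set (MvPolynomial (Fin 3) k)),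
      ∃ i j : Fin 3,
        f = rfBinom3 k
          ![![-1, (u : ℤ) - 1, (v : ℤ) - w - 1],
            ![(lam : ℤ) - 1, -1, (v : ℤ) - 1],
            ![(nu : ℤ) - 1, (z : ℤ) - 1, -1]] i j ∨
        f = - rfBinom3 k
          ![![-1, (u : ℤ) - 1, (v : ℤ) - w - 1],
            ![(lam : ℤ) - 1, -1, (v : ℤ) - 1],
            ![(nu : ℤ) - 1, (z : ℤ) - 1, -1]] i j) ∧
    -- minimality: no generating set with fewer than 3 elements
    (∀ T : Finset (MvPolynomial (Fin 3) k),
      Ideal.span (T : Set (MvPolynomial (Fin 3) k)) =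
        RingHom.ker (MvPolynomial.aeval (R := k)
          (fun i : Fin 3 => (Polynomial.X : Polynomial k) ^ (![m0, m0 + d, n] i))).toRingHom → 3 ≤ T.card) :=
  stmt_16_general k m0 d n hm0 hn u v z w lam mu nu hu hv hzu hwv hlam hgu hvn hnu hW hmupos
end
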